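/- arXiv:2007.06454 — 9 statements merged into one kernel-verified Lean document; each statement's English description precedes it below -/
import Mathlib

section
/- Let K be a totally real number field of degree d over Q with ring of integers O. There exists a constant D > 0, depending only on K, such that for every totally positive element h of K there exists a nonzero z in O with Tr_{K/Q}(h z^2) ≤ D · N_{K/Q}(h)^{1/d}. -/
/-!
Minkowski's theorem for the box `∏ ν (-f ν, f ν)` in `K ⊗ ℝ ≅ ℝ^d` gives a nonzero integer `z` with
`|ν z| < f ν` for every real embedding `ν` as soon as `∏ ν, f ν` exceeds a constant `B` depending
only on `K`. Choosing `f ν = √(t / ν h)` with `t ^ d = B² N(h)` makes every term `ν h * (ν z)²` of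
`Tr(h z²)` smaller than `t = B^(2/d) N(h)^(1/d)`.
-/

open NumberField Module
open scoped NNReal

namespace NumberField

variable (K : Type*) [Field K]

namespace ComplexEmbedding

def realRingHomEquiv : (K →+* ℝ) ≃ {φ : K →+* ℂ // IsReal φ} where
  toFun ν := ⟨Complex.ofRealHom.comp ν, by ext x; simp [conjugate_coe_eq]⟩
  invFun φ := φ.2.embedding
  left_inv ν := by ext x; simp [IsReal.embedding]
  right_inv φ := by ext1; ext1 x; simp

end ComplexEmbedding

open ComplexEmbedding InfinitePlace

theorem IsTotallyReal.of_card_ringHom_real_eq_finrank [NumberField K]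
    (h : Fintype.card (K →+* ℝ) = finrank ℚ K) : IsTotallyReal K := by
  classical
  rw [← nrComplexPlaces_eq_zero_iff]
  have := card_add_two_mul_card_eq_rank K
  rw [Fintype.card_congr (realRingHomEquiv K), card_real_embeddings] at h
  omega

namespace IsTotallyReal

variable [IsTotallyReal K]

def realRingHomEquivComplex : (K →+* ℝ) ≃ (K →+* ℂ) :=
  (realRingHomEquiv K).trans (Equiv.subtypeUnivEquiv complexEmbedding_isReal)

noncomputable def realRingHomEquivInfinitePlace : (K →+* ℝ) ≃ InfinitePlace K :=
  ((realRingHomEquiv K).trans mkReal).trans (Equiv.subtypeUnivEquiv isReal)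

@[simp]
theorem realRingHomEquivInfinitePlace_apply (ν : K →+* ℝ) (x : K) :
    realRingHomEquivInfinitePlace K ν x = |ν x| := by
  simp [realRingHomEquivInfinitePlace, realRingHomEquiv, InfinitePlace.apply]

variable {K} [NumberField K]

theorem trace_eq_sum_ringHom_real (x : K) :
    (Algebra.trace ℚ K x : ℝ) = ∑ ν : K →+* ℝ, ν x := by
  apply Complex.ofReal_injective
  rw [Complex.ofReal_ratCast, ← eq_ratCast (algebraMap ℚ ℂ), trace_eq_sum_embeddings ℂ,
    Complex.ofReal_sum, ← (RingHom.equivRatAlgHom K ℂ).sum_comp,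
    ← (realRingHomEquivComplex K).sum_comp]
  rfl

theorem norm_eq_prod_ringHom_real (x : K) :
    (Algebra.norm ℚ x : ℝ) = ∏ ν : K →+* ℝ, ν x := by
  apply Complex.ofReal_injective
  rw [Complex.ofReal_ratCast, ← eq_ratCast (algebraMap ℚ ℂ),
    Algebra.norm_eq_prod_embeddings ℚ ℂ, Complex.ofReal_prod, ← (RingHom.equivRatAlgHom K ℂ).prod_comp,
    ← (realRingHomEquivComplex K).prod_comp]
  rfl

open mixedEmbedding in
theorem exists_ne_zero_forall_abs_lt :
    ∃ B : ℝ≥0, 0 < B ∧ ∀ f : (K →+* ℝ) → ℝ≥0, B ≤ ∏ ν, f ν →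
      ∃ z : 𝓞 K, z ≠ 0 ∧ ∀ ν : K →+* ℝ, |ν z| < f ν := by
  classical
  set c := convexBodyLTFactor K
  have hc : 0 < c := (convexBodyLTFactor_ne_zero K).bot_lt
  set M := (minkowskiBound K 1).toNNReal
  refine ⟨M / c + 1, by positivity, fun f hf => ?_⟩
  let e := realRingHomEquivInfinitePlace K
  have hvol : minkowskiBound K ↑1 < MeasureTheory.volume (convexBodyLT K (f ∘ e.symm)) := by
    rw [convexBodyLT_volume, ← ENNReal.coe_toNNReal (minkowskiBound_lt_top K 1).ne]
    simp only [mult_eq, pow_one, Function.comp_apply, e.symm.prod_comp]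
    norm_cast
    calc M = c * (M / c) := (mul_div_cancel₀ _ hc.ne').symm
      _ < c * (M / c + 1) := by gcongr; exact lt_add_one _
      _ ≤ c * ∏ ν, f ν := by gcongr
  obtain ⟨z, hz, hlt⟩ := exists_ne_zero_mem_ringOfIntegers_lt K hvol
  exact ⟨z, hz, fun ν => by simpa [e] using hlt (e ν)⟩

variable (K) in
theorem card_ringHom_real : Fintype.card (K →+* ℝ) = finrank ℚ K :=
  (Fintype.card_congr (realRingHomEquivComplex K)).trans (Embeddings.card K ℂ)

theorem exists_ne_zero_forall_mul_sq_lt :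
    ∃ C : ℝ, 0 < C ∧ ∀ a : (K →+* ℝ) → ℝ, (∀ ν, 0 < a ν) →
      ∃ z : 𝓞 K, z ≠ 0 ∧ ∀ ν : K →+* ℝ,
        a ν * ν z ^ 2 < C * (∏ ν, a ν) ^ ((1 : ℝ) / finrank ℚ K) := by
  obtain ⟨B, hB, hbox⟩ := exists_ne_zero_forall_abs_lt (K := K)
  set d := finrank ℚ K
  have hd : d ≠ 0 := finrank_pos.ne'
  refine ⟨((B : ℝ) ^ 2) ^ ((1 : ℝ) / d), by positivity, fun a ha => ?_⟩
  set P := ∏ ν, a ν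
  have hP : 0 < P := Finset.prod_pos fun ν _ => ha ν
  set t := ((B : ℝ) ^ 2 * P) ^ ((1 : ℝ) / d) with ht_def
  have ht0 : 0 ≤ t := by positivity
  have ht : t ^ d = B ^ 2 * P := by
    rw [ht_def, one_div, Real.rpow_inv_natCast_pow (by positivity) hd]
  have hprod : B ≤ ∏ ν, Real.toNNReal √(t / a ν) := by
    rw [← NNReal.coe_le_coe, NNReal.coe_prod]
    simp only [Real.coe_toNNReal _ (Real.sqrt_nonneg _)]
    rw [← Real.sqrt_prod _ fun ν _ => div_nonneg ht0 (ha ν).le, Finset.prod_div_distrib,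
      Finset.prod_const, Finset.card_univ, card_ringHom_real, ht, mul_div_cancel_right₀ _ hP.ne',
      Real.sqrt_sq B.coe_nonneg]
  obtain ⟨z, hz, hlt⟩ := hbox _ hprod
  refine ⟨z, hz, fun ν => ?_⟩
  have hsq : ν z ^ 2 < t / a ν := by
    have := hlt ν
    rwa [Real.coe_toNNReal _ (Real.sqrt_nonneg _), Real.lt_sqrt (abs_nonneg _), sq_abs] at this
  calc a ν * ν z ^ 2 < t := (lt_div_iff₀' (ha ν)).mp hsq
    _ = _ := Real.mul_rpow (by positivity) hP.le

end IsTotallyReal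
end NumberField

/-- Let K be a totally real number field of degree d over ℚ with ring of integers O.
There exists a constant D > 0, depending only on K, such that for every totally positive
element h of K there exists a nonzero z in O with Tr(h z²) ≤ D · N(h)^(1/d). -/
theorem trace_le_of_totally_positive
    (K : Type*) [Field K] [NumberField K]
    (htr : Fintype.card (K →+* ℝ) = finrank ℚ K) :
    ∃ D : ℝ, 0 < D ∧ ∀ h : K, (∀ ν : K →+* ℝ, 0 < ν h) →
      ∃ z : 𝓞 K, z ≠ 0 ∧
        (Algebra.trace ℚ K (h * (z : K) ^ 2) : ℝ) ≤
          D * (Algebra.norm ℚ h : ℝ) ^ ((1 : ℝ) / (finrank ℚ K : ℝ)) := by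
  have := IsTotallyReal.of_card_ringHom_real_eq_finrank K htr
  obtain ⟨C, hC, hmin⟩ := IsTotallyReal.exists_ne_zero_forall_mul_sq_lt (K := K)
  refine ⟨finrank ℚ K * C, mul_pos (Nat.cast_pos.2 finrank_pos) hC, fun h hpos => ?_⟩
  obtain ⟨z, hz, hlt⟩ := hmin (fun ν => ν h) hpos
  refine ⟨z, hz, ?_⟩
  rw [IsTotallyReal.trace_eq_sum_ringHom_real, IsTotallyReal.norm_eq_prod_ringHom_real, mul_assoc]
  calc ∑ ν : K →+* ℝ, ν (h * z ^ 2)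
      ≤ ∑ _ν : K →+* ℝ, C * (∏ ν : K →+* ℝ, ν h) ^ ((1 : ℝ) / finrank ℚ K) :=
        Finset.sum_le_sum fun ν _ => by simpa using (hlt ν).le
    _ = _ := by rw [Finset.sum_const, Finset.card_univ, htr, nsmul_eq_mul]
end

section
/- Let K be a totally real number field. There exists a constant λ ≥ 1, depending only on K, such that for every totally positive element h of the ring of integers O there is a unit ε of O with (ε²h)^(ν) ≤ λ·(ε²h)^(μ) for all pairs of real embeddings ν, μ of K. -/
open NumberField Module InfinitePlace

/-! By Dirichlet's unit theorem the vectors `(log w(ε))_w` of the units `ε` form a full lattice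
in the hyperplane `∑ mult w · x_w = 0`, so every point of that hyperplane is within bounded
distance of one of them. Take the point `x_w = (s - log w(h)) / 2`, where `s` is the weighted
mean of the `log w(h)`: then every `log w(ε²h) = 2 (log w(ε) - x_w) + s` is within bounded
distance of `s`, and real embeddings `ν` satisfy `|ν(a)| = w(a)` for the place `w` of `ν`. -/

theorem Submodule.exists_norm_sub_le_of_span_eq_top {E : Type*} [NormedAddCommGroup E]
    [NormedSpace ℝ E] [FiniteDimensional ℝ E] (L : Submodule ℤ E)
    (hL : Submodule.span ℝ (L : Set E) = ⊤) :
    ∃ C : ℝ, 0 ≤ C ∧ ∀ v : E, ∃ u ∈ L, ‖v - u‖ ≤ C := by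
  let b := Basis.ofSpan hL.ge
  let := @Fintype.ofFinite _ (Module.Finite.finite_basis b)
  refine ⟨∑ i, ‖b i‖, by positivity, fun v =>
    ⟨ZSpan.floor b v, ?_, ZSpan.norm_fract_le b v⟩⟩
  exact Submodule.span_le.mpr (Basis.ofSpan_subset _) (ZSpan.floor b v).2

theorem Finset.abs_le_card_mul_of_sum_eq_zero {ι : Type*} [Fintype ι] [DecidableEq ι]
    {d : ι → ℝ} {C : ℝ} (hC : 0 ≤ C) (hd : ∑ i, d i = 0) (i₀ : ι)
    (h : ∀ i ≠ i₀, |d i| ≤ C) (i : ι) : |d i| ≤ Fintype.card ι * C := by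
  have hcard : C ≤ Fintype.card ι * C :=
    le_mul_of_one_le_left hC (Nat.one_le_cast.mpr (Fintype.card_pos_iff.mpr ⟨i⟩))
  rcases eq_or_ne i i₀ with rfl | hi
  · rw [← add_sum_erase _ _ (mem_univ i), add_eq_zero_iff_eq_neg] at hd
    calc |d i| = |∑ j ∈ univ.erase i, d j| := by rw [hd, abs_neg]
      _ ≤ ∑ j ∈ univ.erase i, |d j| := abs_sum_le_sum_abs _ _
      _ ≤ (univ.erase i).card • C :=
          sum_le_card_nsmul _ _ _ fun j hj => h j (ne_of_mem_erase hj)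
      _ ≤ Fintype.card ι * C := by
          rw [nsmul_eq_mul]
          gcongr
          exact_mod_cast (card_erase_le).trans_eq card_univ
  · exact (h i hi).trans hcard

namespace NumberField.Units

variable (K : Type*) [Field K] [NumberField K]

theorem exists_abs_log_sub_le :
    ∃ C : ℝ, ∀ x : InfinitePlace K → ℝ, ∑ w, (mult w : ℝ) * x w = 0 →
      ∃ ε : (𝓞 K)ˣ, ∀ w, |Real.log (w ε) - x w| ≤ C := by
  classical
  obtain ⟨C, hC0, hC⟩ := (unitLattice K).exists_norm_sub_le_of_span_eq_top
    (dirichletUnitTheorem.unitLattice_span_eq_top K)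
  refine ⟨Fintype.card (InfinitePlace K) * C, fun x hx => ?_⟩
  obtain ⟨_, ⟨ε, -, rfl⟩, hε⟩ := hC fun w => mult w.1 * x w.1
  set η : (𝓞 K)ˣ := Additive.toMul ε
  have hsum : ∑ w : InfinitePlace K, (mult w : ℝ) * (Real.log (w η) - x w) = 0 := by
    simp only [mul_sub, Finset.sum_sub_distrib, sum_mult_mul_log, hx, sub_zero]
  have hclose : ∀ w : InfinitePlace K, w ≠ dirichletUnitTheorem.w₀ →
      |(mult w : ℝ) * (Real.log (w η) - x w)| ≤ C := fun w hw => by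
    have := (norm_le_pi_norm _ ⟨w, hw⟩).trans hε
    change ‖(mult w : ℝ) * x w - mult w * Real.log (w η)‖ ≤ C at this
    rwa [mul_sub, abs_sub_comm]
  refine ⟨η, fun w => ?_⟩
  have hbound :=
    Finset.abs_le_card_mul_of_sum_eq_zero hC0 hsum dirichletUnitTheorem.w₀ hclose w
  rw [abs_mul, Nat.abs_cast] at hbound
  exact (le_mul_of_one_le_left (abs_nonneg _) one_le_mult).trans hbound

theorem exists_unit_pow_mul_le {n : ℕ} (hn : n ≠ 0) :
    ∃ C : ℝ, ∀ x : K, ∃ ε : (𝓞 K)ˣ, ∀ w w' : InfinitePlace K,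
      w ((ε : K) ^ n * x) ≤ C * w' ((ε : K) ^ n * x) := by
  obtain ⟨C, hC⟩ := exists_abs_log_sub_le K
  refine ⟨Real.exp (2 * (n * C)), fun x => ?_⟩
  rcases eq_or_ne x 0 with rfl | hx
  · exact ⟨1, fun w w' => by simp⟩
  set s := (∑ w : InfinitePlace K, (mult w : ℝ) * Real.log (w x)) / finrank ℚ K
  obtain ⟨ε, hε⟩ := hC (fun w => (s - Real.log (w x)) / n) (by
    have : (finrank ℚ K : ℝ) ≠ 0 := Nat.cast_ne_zero.mpr finrank_pos.ne'
    simp only [mul_div_assoc', ← Finset.sum_div, mul_sub, Finset.sum_sub_distrib,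
      ← Finset.sum_mul, ← Nat.cast_sum, sum_mult_eq, s]
    field_simp
    ring)
  have hlog : ∀ w : InfinitePlace K, |Real.log (w ((ε : K) ^ n * x)) - s| ≤ n * C := by
    intro w
    have hεw := pos_at_place ε w
    rw [map_mul, map_pow, Real.log_mul (by positivity) (pos_iff.mpr hx).ne', Real.log_pow,
      show (n : ℝ) * Real.log (w ε) + Real.log (w x) - s
        = n * (Real.log (w ε) - (s - Real.log (w x)) / n) by field_simp; ring,
      abs_mul, Nat.abs_cast]
    exact mul_le_mul_of_nonneg_left (hε w) n.cast_nonneg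
  refine ⟨ε, fun w w' => ?_⟩
  have hpos : ∀ w : InfinitePlace K, 0 < w ((ε : K) ^ n * x) := fun w =>
    pos_iff.mpr (mul_ne_zero (pow_ne_zero _ (coe_ne_zero ε)) hx)
  rw [← Real.exp_log (hpos w), ← Real.exp_log (hpos w'), ← Real.exp_add, Real.exp_le_exp]
  linarith [abs_le.mp (hlog w), abs_le.mp (hlog w')]

end NumberField.Units

theorem exists_unit_balancing_general
    (K : Type*) [Field K] [NumberField K] :
    ∃ lam : ℝ, 1 ≤ lam ∧ ∀ h : 𝓞 K, (∀ ν : K →+* ℝ, 0 < ν (h : K)) →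
      ∃ ε : (𝓞 K)ˣ, ∀ ν μ : K →+* ℝ,
        ν (((ε : 𝓞 K) : K) ^ 2 * (h : K)) ≤ lam * μ (((ε : 𝓞 K) : K) ^ 2 * (h : K)) := by
  obtain ⟨C, hC⟩ := Units.exists_unit_pow_mul_le K two_ne_zero
  refine ⟨max C 1, le_max_right _ _, fun h hpos => ?_⟩
  obtain ⟨ε, hε⟩ := hC h
  refine ⟨ε, fun ν μ => ?_⟩
  set y := ((ε : 𝓞 K) : K) ^ 2 * (h : K)
  have hμ : 0 ≤ μ y := by
    rw [map_mul, map_pow]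
    exact mul_nonneg (sq_nonneg _) (hpos μ).le
  have hplace : ∀ ρ : K →+* ℝ, mk (Complex.ofRealHom.comp ρ) y = |ρ y| := fun ρ => by
    simp [InfinitePlace.apply]
  calc ν y ≤ |ν y| := le_abs_self _
    _ ≤ C * |μ y| := by
        simpa only [hplace] using
          hε (mk (Complex.ofRealHom.comp ν)) (mk (Complex.ofRealHom.comp μ))
    _ ≤ max C 1 * μ y := by rw [abs_of_nonneg hμ]; gcongr; exact le_max_left _ _

/-- Every totally positive algebraic integer of a totally real number field K can be scaled by
the square of a unit so that all its real embeddings are within a multiplicative factor λ of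
each other, λ depending only on K. -/
theorem exists_unit_balancing
    (K : Type*) [Field K] [NumberField K]
    (htr : Fintype.card (K →+* ℝ) = finrank ℚ K) :
    ∃ lam : ℝ, 1 ≤ lam ∧ ∀ h : 𝓞 K, (∀ ν : K →+* ℝ, 0 < ν (h : K)) →
      ∃ ε : (𝓞 K)ˣ, ∀ ν μ : K →+* ℝ,
        ν (((ε : 𝓞 K) : K) ^ 2 * (h : K)) ≤ lam * μ (((ε : 𝓞 K) : K) ^ 2 * (h : K)) :=
  exists_unit_balancing_general K
end

section
/- Let n ≥ 2, let A = diag(a₁,…,aₙ) be a real diagonal matrix, and let S = (s_{ij}) be a real symmetric n×n matrix. If for each i one can write a_i = Σ_{j=1}^n t_{ij} with t_{ij} > 0 and t_{ij}·t_{ji} > s_{ij}² for all j, then A + S is positive definite. -/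
open Matrix

/-!
Splitting each diagonal entry as `a i = ∑ j, t i j` and symmetrising, twice the quadratic form
`xᵀ (A + S) x` becomes the sum over all ordered pairs `(i, j)` of the binary forms
`t i j * x i ^ 2 + 2 * S i j * x i * x j + t j i * x j ^ 2`. The hypothesis
`S i j ^ 2 < t i j * t j i` makes each of them positive semidefinite, and the diagonal pair
`(i, i)` contributes `2 * (t i i + S i i) * x i ^ 2`, which is positive as soon as `x i ≠ 0`.
-/

theorem binary_quadratic_nonneg {p q s : ℝ} (hp : 0 < p) (hpq : s ^ 2 ≤ p * q) (x y : ℝ) :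
    0 ≤ p * x ^ 2 + 2 * s * x * y + q * y ^ 2 := by
  refine nonneg_of_mul_nonneg_right ?_ hp
  calc 0 ≤ (p * x + s * y) ^ 2 + (p * q - s ^ 2) * y ^ 2 := by
        have := sub_nonneg.2 hpq
        positivity
    _ = p * (p * x ^ 2 + 2 * s * x * y + q * y ^ 2) := by ring

section QuadraticForm

variable {ι : Type*} [Fintype ι]

theorem sum_sum_add_swap (f : ι → ι → ℝ) :
    2 * ∑ i, ∑ j, f i j = ∑ i, ∑ j, (f i j + f j i) := by
  rw [two_mul]
  nth_rw 2 [Finset.sum_comm]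
  simp only [← Finset.sum_add_distrib]

variable [DecidableEq ι]

theorem dotProduct_diagonal_add_mulVec (a x : ι → ℝ) (S : Matrix ι ι ℝ) :
    x ⬝ᵥ (diagonal a + S) *ᵥ x = ∑ i, a i * x i ^ 2 + ∑ i, ∑ j, S i j * x i * x j := by
  rw [add_mulVec, dotProduct_add]
  congr 1
  · simp only [dotProduct, mulVec_diagonal]
    exact Finset.sum_congr rfl fun i _ => by ring
  · simp only [dotProduct, mulVec, Finset.mul_sum]
    exact Finset.sum_congr rfl fun i _ => Finset.sum_congr rfl fun j _ => by ring

theorem two_mul_dotProduct_diagonal_add_mulVec {a : ι → ℝ} {t : ι → ι → ℝ}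
    (ha : ∀ i, a i = ∑ j, t i j) {S : Matrix ι ι ℝ} (hS : S.IsSymm) (x : ι → ℝ) :
    2 * (x ⬝ᵥ (diagonal a + S) *ᵥ x) =
      ∑ i, ∑ j, (t i j * x i ^ 2 + 2 * S i j * x i * x j + t j i * x j ^ 2) := by
  have split : x ⬝ᵥ (diagonal a + S) *ᵥ x =
      ∑ i, ∑ j, (t i j * x i ^ 2 + S i j * x i * x j) := by
    simp only [dotProduct_diagonal_add_mulVec, ha, Finset.sum_mul, ← Finset.sum_add_distrib]
  rw [split, sum_sum_add_swap]
  refine Finset.sum_congr rfl fun i _ => Finset.sum_congr rfl fun j _ => ?_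
  rw [hS.apply]
  ring

end QuadraticForm

theorem diagonal_add_symm_posDef_general
    (n : ℕ) (a : Fin n → ℝ) (S : Matrix (Fin n) (Fin n) ℝ)
    (hS : S.IsSymm) (t : Fin n → Fin n → ℝ)
    (ha : ∀ i, a i = ∑ j, t i j)
    (ht : ∀ i j, 0 < t i j)
    (hts : ∀ i j, S i j ^ 2 < t i j * t j i) :
    (Matrix.diagonal a + S).PosDef := by
  refine posDef_iff_dotProduct_mulVec.2 ⟨isHermitian_iff_isSymm.2 ((isSymm_diagonal a).add hS),
    fun x hx => ?_⟩
  obtain ⟨i₀, hi₀⟩ : ∃ i, x i ≠ 0 := Function.ne_iff.mp hx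
  have pair_nonneg (i j : Fin n) :
      0 ≤ t i j * x i ^ 2 + 2 * S i j * x i * x j + t j i * x j ^ 2 :=
    binary_quadratic_nonneg (ht i j) (hts i j).le (x i) (x j)
  have diag_pos : 0 < t i₀ i₀ * x i₀ ^ 2 + 2 * S i₀ i₀ * x i₀ * x i₀ + t i₀ i₀ * x i₀ ^ 2 := by
    have hS₀ := abs_lt_of_sq_lt_sq' ((sq (t i₀ i₀)).symm ▸ hts i₀ i₀) (ht i₀ i₀).le
    have hts₀ : 0 < t i₀ i₀ + S i₀ i₀ := by linarith [hS₀.1]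
    calc 0 < 2 * (t i₀ i₀ + S i₀ i₀) * x i₀ ^ 2 := by positivity
      _ = _ := by ring
  have twice_form_pos : 0 < 2 * (x ⬝ᵥ (diagonal a + S) *ᵥ x) := by
    rw [two_mul_dotProduct_diagonal_add_mulVec ha hS]
    exact Finset.sum_pos' (fun i _ => Finset.sum_nonneg fun j _ => pair_nonneg i j)
      ⟨i₀, Finset.mem_univ _, Finset.sum_pos' (fun j _ => pair_nonneg i₀ j)
        ⟨i₀, Finset.mem_univ _, diag_pos⟩⟩
  rw [star_trivial]
  linarith [twice_form_pos]

/-- Let n ≥ 2, A = diag(a₁,…,aₙ) real diagonal, S real symmetric.  If each a_i = Σ_j t_{ij}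
with t_{ij} > 0 and t_{ij}·t_{ji} > s_{ij}² for all j, then A + S is positive definite. -/
theorem diagonal_add_symm_posDef
    (n : ℕ) (hn : 2 ≤ n) (a : Fin n → ℝ) (S : Matrix (Fin n) (Fin n) ℝ)
    (hS : S.IsSymm) (t : Fin n → Fin n → ℝ)
    (ha : ∀ i, a i = ∑ j, t i j)
    (ht : ∀ i j, 0 < t i j)
    (hts : ∀ i j, S i j ^ 2 < t i j * t j i) :
    (Matrix.diagonal a + S).PosDef :=
  diagonal_add_symm_posDef_general n a S hS t ha ht hts
end

section
/- Let Λ be an O-lattice in a quadratic space over a number field K, u₁ ∈ Λ nonzero, π the orthogonal projection onto the orthogonal complement of K·u₁, and v₂,…,vₙ linearly independent vectors of π(Λ) with lifts uⱼ ∈ Λ, π(uⱼ) = vⱼ. If the coefficient ideal of u₁ relative to Λ is b⁻¹ (b an integral ideal) and b' is the annihilator ideal of π(Λ) modulo O·v₂ ⊕ ⋯ ⊕ O·vₙ, then the product b·b' is contained in the annihilator of Λ modulo O·u₁ ⊕ ⋯ ⊕ O·uₙ. -/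
open NumberField Module
open scoped nonZeroDivisors

/-!
Write `a' • π x = ∑ cⱼ vⱼ` for `a' ∈ b'`. Then `w = a' • x - ∑ cⱼ uⱼ` lies in `Λ` and in the kernel
of `π`, which is `K · u₁`; so `w = α • u₁` with `α ∈ b⁻¹`, and `a • w ∈ O · u₁` for `a ∈ b`
because `b · b⁻¹ ⊆ O`. Hence `(a a') • x = a • w + ∑ (a cⱼ) uⱼ ∈ O u₁ + ⋯ + O uₙ`.
-/

namespace Submodule

variable {R V W : Type*} [CommRing R] [AddCommGroup V] [Module R V] [AddCommGroup W] [Module R W]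

theorem smul_mem_sup_span_of_smul_apply_mem_span {f : V →ₗ[R] W} {Λ N : Submodule R V}
    {ι : Type*} {u : ι → V} (hu : ∀ j, u j ∈ Λ) {a a' : R}
    (ha : ∀ k ∈ Λ, f k = 0 → a • k ∈ N) {x : V} (hx : x ∈ Λ)
    (hfx : a' • f x ∈ span R (Set.range (f ∘ u))) :
    (a * a') • x ∈ N ⊔ span R (Set.range u) := by
  have hx' : a' • x ∈ span R (Set.range u) ⊔ LinearMap.ker f := by
    rw [← comap_map_eq, map_span, ← Set.range_comp, mem_comap, map_smul]
    exact hfx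
  obtain ⟨z, hz, k, hk, hzk⟩ := mem_sup.mp hx'
  have hkΛ : k ∈ Λ := by
    rw [show k = a' • x - z by rw [← hzk, add_sub_cancel_left]]
    exact sub_mem (smul_mem _ _ hx) (span_le.mpr (Set.range_subset_iff.mpr hu) hz)
  rw [mul_smul, ← hzk, smul_add, add_comm]
  exact add_mem_sup (ha k hkΛ hk) (smul_mem _ _ hz)

end Submodule

namespace FractionalIdeal

variable {R K : Type*} [CommRing R] [IsDomain R] [Field K] [Algebra R K] [IsFractionRing R K]

theorem exists_algebraMap_eq_mul_of_mem_inv {I : Ideal R} {a : R} (ha : a ∈ I) {α : K}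
    (hα : α ∈ (I : FractionalIdeal R⁰ K)⁻¹) : ∃ o : R, algebraMap R K o = algebraMap R K a * α :=
  (mem_one_iff R⁰).mp (mul_one_div_le_one (mul_mem_mul (mem_coeIdeal_of_mem R⁰ ha) hα))

theorem smul_smul_mem_span_singleton_of_mem_inv {V : Type*} [AddCommGroup V] [Module K V]
    [Module R V] [IsScalarTower R K V] {I : Ideal R} {a : R} (ha : a ∈ I) {α : K}
    (hα : α ∈ (I : FractionalIdeal R⁰ K)⁻¹) (u : V) : a • α • u ∈ R ∙ u := by
  obtain ⟨o, ho⟩ := exists_algebraMap_eq_mul_of_mem_inv ha hα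
  exact Submodule.mem_span_singleton.mpr
    ⟨o, by rw [← algebraMap_smul K o, ho, mul_smul, algebraMap_smul]⟩

end FractionalIdeal

theorem mul_ideal_subset_annihilator_general
    (K : Type*) [Field K] [NumberField K]
    (V : Type*) [AddCommGroup V] [Module K V] [Module (𝓞 K) V] [IsScalarTower (𝓞 K) K V]
    (B : V →ₗ[K] V →ₗ[K] K)
    (Λ : Submodule (𝓞 K) V)
    (u₁ : V)
    (π : V →ₗ[K] V) (hπ : ∀ x : V, π x = x - (B x u₁ / B u₁ u₁) • u₁)
    (n : ℕ) (v : Fin n → V) (u : Fin n → V)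
    (huΛ : ∀ j, u j ∈ Λ) (hπu : ∀ j, π (u j) = v j)
    (b : Ideal (𝓞 K))
    (hcoeff : ∀ α : K, α • u₁ ∈ Λ ↔ α ∈ ((b : FractionalIdeal (𝓞 K)⁰ K)⁻¹))
    (b' : Ideal (𝓞 K))
    (hb' : ∀ a : 𝓞 K, a ∈ b' ↔
      ∀ x ∈ Λ.map (π.restrictScalars (𝓞 K)), a • x ∈ Submodule.span (𝓞 K) (Set.range v)) :
    ∀ a ∈ b, ∀ a' ∈ b', ∀ x ∈ Λ,
      (a * a') • x ∈ Submodule.span (𝓞 K) (Set.range (Fin.cons u₁ u)) := by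
  intro a ha a' ha' x hx
  have hker : ∀ k ∈ Λ, π.restrictScalars (𝓞 K) k = 0 → a • k ∈ (𝓞 K) ∙ u₁ := by
    intro k hkΛ hk
    have hk_eq : k = (B k u₁ / B u₁ u₁) • u₁ := eq_of_sub_eq_zero ((hπ k).symm.trans hk)
    rw [hk_eq] at hkΛ ⊢
    exact FractionalIdeal.smul_smul_mem_span_singleton_of_mem_inv ha ((hcoeff _).mp hkΛ) u₁
  have hv : π.restrictScalars (𝓞 K) ∘ u = v := funext hπu
  rw [Fin.range_cons, Submodule.span_insert]
  refine Submodule.smul_mem_sup_span_of_smul_apply_mem_span huΛ hker hx ?_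
  rw [hv]
  exact (hb' a').mp ha' _ (Submodule.mem_map_of_mem hx)

/-- If the coefficient ideal of u₁ relative to Λ is b⁻¹ and b' is the annihilator of π(Λ)
modulo O·v₂ ⊕ ⋯ ⊕ O·vₙ, then b·b' is contained in the annihilator of Λ modulo
O·u₁ ⊕ ⋯ ⊕ O·uₙ. -/
theorem mul_ideal_subset_annihilator
    (K : Type*) [Field K] [NumberField K]
    (V : Type*) [AddCommGroup V] [Module K V] [Module (𝓞 K) V] [IsScalarTower (𝓞 K) K V]
    (B : V →ₗ[K] V →ₗ[K] K) (hBsymm : ∀ x y : V, B x y = B y x)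
    (Λ : Submodule (𝓞 K) V)
    (u₁ : V) (hu₁Λ : u₁ ∈ Λ) (hu₁0 : u₁ ≠ 0) (hanis : B u₁ u₁ ≠ 0)
    (π : V →ₗ[K] V) (hπ : ∀ x : V, π x = x - (B x u₁ / B u₁ u₁) • u₁)
    (n : ℕ) (v : Fin n → V) (u : Fin n → V)
    (huΛ : ∀ j, u j ∈ Λ) (hπu : ∀ j, π (u j) = v j)
    (hvli : LinearIndependent (𝓞 K) v)
    (b : Ideal (𝓞 K)) (hb : b ≠ 0)
    (hcoeff : ∀ α : K, α • u₁ ∈ Λ ↔ α ∈ ((b : FractionalIdeal (𝓞 K)⁰ K)⁻¹))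
    (b' : Ideal (𝓞 K))
    (hb' : ∀ a : 𝓞 K, a ∈ b' ↔
      ∀ x ∈ Λ.map (π.restrictScalars (𝓞 K)), a • x ∈ Submodule.span (𝓞 K) (Set.range v)) :
    ∀ a ∈ b, ∀ a' ∈ b', ∀ x ∈ Λ,
      (a * a') • x ∈ Submodule.span (𝓞 K) (Set.range (Fin.cons u₁ u)) :=
  mul_ideal_subset_annihilator_general K V B Λ u₁ π hπ n v u huΛ hπu b hcoeff b' hb'
end

section
/- Let Λ be a positive definite O-lattice over a totally real number field K, with min(Λ) = min{ N_{K/Q}(Q(x)) : 0 ≠ x ∈ Λ }. If v is a minimal vector of Λ (i.e. N_{K/Q}(Q(v)) = min(Λ)) and b⁻¹ is the coefficient ideal of v relative to Λ, then b is an integral ideal of minimal norm in its ideal class. -/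
open NumberField Module
open scoped nonZeroDivisors

/-!
If `γ b = c` with `c` integral, then `γ ∈ b⁻¹`, so `γ v ∈ Λ` is a nonzero lattice vector and
minimality of `v` gives `N(Q v) ≤ N(γ)² N(Q v)`. Total positivity of `Q v` on a totally real field
makes `N(Q v) > 0`, hence `|N γ| ≥ 1`, and `N(c) = |N γ| N(b) ≥ N(b)`.
-/

section TotallyReal

variable {K : Type*} [Field K] [NumberField K]

theorem bijective_ofRealHom_comp (htr : Fintype.card (K →+* ℝ) = finrank ℚ K) :
    Function.Bijective fun ν : K →+* ℝ => Complex.ofRealHom.comp ν :=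
  (Fintype.bijective_iff_injective_and_card _).mpr
    ⟨fun _ _ h => RingHom.ext fun x => Complex.ofReal_injective (RingHom.congr_fun h x),
      by rw [htr, Embeddings.card K ℂ]⟩

theorem Algebra.norm_eq_prod_realEmbeddings (htr : Fintype.card (K →+* ℝ) = finrank ℚ K)
    (y : K) : (Algebra.norm ℚ y : ℝ) = ∏ ν : K →+* ℝ, ν y := by
  apply Complex.ofReal_injective
  calc ((Algebra.norm ℚ y : ℝ) : ℂ) = algebraMap ℚ ℂ (Algebra.norm ℚ y) := by simp
    _ = ∏ σ : K →ₐ[ℚ] ℂ, σ y := Algebra.norm_eq_prod_embeddings ℚ ℂ y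
    _ = ∏ σ : K →+* ℂ, σ y :=
      Fintype.prod_equiv (RingHom.equivRatAlgHom K ℂ).symm _ _ fun _ => rfl
    _ = ∏ ν : K →+* ℝ, ((ν y : ℝ) : ℂ) :=
      (Fintype.prod_bijective _ (bijective_ofRealHom_comp htr) _ _ fun _ => rfl).symm
    _ = _ := (Complex.ofReal_prod _ _).symm

theorem Algebra.norm_pos_of_forall_realEmbedding_pos
    (htr : Fintype.card (K →+* ℝ) = finrank ℚ K) {y : K} (hy : ∀ ν : K →+* ℝ, 0 < ν y) :
    0 < Algebra.norm ℚ y := by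
  have : (0 : ℝ) < Algebra.norm ℚ y :=
    Algebra.norm_eq_prod_realEmbeddings htr y ▸ Finset.prod_pos fun ν _ => hy ν
  exact_mod_cast this

end TotallyReal

theorem FractionalIdeal.mem_inv_of_spanSingleton_mul_le_one {R K : Type*} [CommRing R]
    [IsDomain R] [Field K] [Algebra R K] [IsFractionRing R K] {I : FractionalIdeal R⁰ K}
    (hI : I ≠ 0) {γ : K} (h : spanSingleton R⁰ γ * I ≤ 1) : γ ∈ I⁻¹ :=
  (mem_inv_iff hI).mpr fun _ hy => h (mul_mem_mul (mem_spanSingleton_self _ _) hy)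

theorem Ideal.absNorm_eq_abs_norm_mul_of_spanSingleton_mul_eq {K : Type*} [Field K]
    [NumberField K] {b c : Ideal (𝓞 K)} {γ : K}
    (h : FractionalIdeal.spanSingleton (𝓞 K)⁰ γ * (b : FractionalIdeal (𝓞 K)⁰ K) = c) :
    (Ideal.absNorm c : ℚ) = |Algebra.norm ℚ γ| * Ideal.absNorm b := by
  simpa [FractionalIdeal.coeIdeal_absNorm] using (congrArg FractionalIdeal.absNorm h).symm

theorem QuadraticMap.one_le_abs_norm_of_norm_le_norm_smul {F K V : Type*} [Field F]
    [LinearOrder F] [IsStrictOrderedRing F] [CommRing K] [Algebra F K] [AddCommGroup V]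
    [Module K V] (Q : QuadraticForm K V) {v : V} {γ : K}
    (hv : 0 < Algebra.norm F (Q v)) (h : Algebra.norm F (Q v) ≤ Algebra.norm F (Q (γ • v))) :
    1 ≤ |Algebra.norm F γ| := by
  rw [QuadraticMap.map_smul, smul_eq_mul, map_mul, map_mul] at h
  have : 1 ≤ |Algebra.norm F γ| * |Algebra.norm F γ| := by
    rw [abs_mul_abs_self]
    exact le_of_mul_le_mul_right (by linarith) hv
  nlinarith [abs_nonneg (Algebra.norm F γ)]

theorem coeff_ideal_of_minimal_vector_min_norm_general
    (K : Type*) [Field K] [NumberField K]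
    (htr : Fintype.card (K →+* ℝ) = finrank ℚ K)
    (V : Type*) [AddCommGroup V] [Module K V] [Module (𝓞 K) V]
    (Q : QuadraticForm K V)
    (hQpos : ∀ x : V, x ≠ 0 → ∀ ν : K →+* ℝ, 0 < ν (Q x))
    (Λ : Submodule (𝓞 K) V)
    (v : V) (hv0 : v ≠ 0)
    (hmin : ∀ x ∈ Λ, x ≠ 0 → Algebra.norm ℚ (Q v) ≤ Algebra.norm ℚ (Q x))
    (b : Ideal (𝓞 K)) (hb : b ≠ 0)
    (hcoeff : ∀ α : K, α • v ∈ Λ ↔ α ∈ ((b : FractionalIdeal (𝓞 K)⁰ K)⁻¹)) :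
    ∀ c : Ideal (𝓞 K), c ≠ 0 →
      (∃ γ : K, γ ≠ 0 ∧
        FractionalIdeal.spanSingleton (𝓞 K)⁰ γ * (b : FractionalIdeal (𝓞 K)⁰ K) =
          (c : FractionalIdeal (𝓞 K)⁰ K)) →
      Ideal.absNorm b ≤ Ideal.absNorm c := by
  rintro c - ⟨γ, hγ0, hγ⟩
  have hγ_inv : γ ∈ (b : FractionalIdeal (𝓞 K)⁰ K)⁻¹ :=
    FractionalIdeal.mem_inv_of_spanSingleton_mul_le_one (by simpa using hb)
      (hγ ▸ FractionalIdeal.coeIdeal_le_one)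
  have hγ_norm : 1 ≤ |Algebra.norm ℚ γ| :=
    Q.one_le_abs_norm_of_norm_le_norm_smul
      (Algebra.norm_pos_of_forall_realEmbedding_pos htr (hQpos v hv0))
      (hmin _ ((hcoeff γ).mpr hγ_inv) (smul_ne_zero hγ0 hv0))
  have : (Ideal.absNorm b : ℚ) ≤ Ideal.absNorm c := by
    rw [Ideal.absNorm_eq_abs_norm_mul_of_spanSingleton_mul_eq hγ]
    exact le_mul_of_one_le_left (Nat.cast_nonneg _) hγ_norm
  exact_mod_cast this

/-- If v is a minimal vector of a positive definite O-lattice Λ over a totally real number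
field and b⁻¹ is the coefficient ideal of v relative to Λ, then b is an integral ideal of
minimal (absolute) norm in its ideal class. -/
theorem coeff_ideal_of_minimal_vector_min_norm
    (K : Type*) [Field K] [NumberField K]
    (htr : Fintype.card (K →+* ℝ) = finrank ℚ K)
    (V : Type*) [AddCommGroup V] [Module K V] [Module (𝓞 K) V] [IsScalarTower (𝓞 K) K V]
    (Q : QuadraticForm K V)
    (hQpos : ∀ x : V, x ≠ 0 → ∀ ν : K →+* ℝ, 0 < ν (Q x))
    (Λ : Submodule (𝓞 K) V)
    (v : V) (hvΛ : v ∈ Λ) (hv0 : v ≠ 0)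
    (hmin : ∀ x ∈ Λ, x ≠ 0 → Algebra.norm ℚ (Q v) ≤ Algebra.norm ℚ (Q x))
    (b : Ideal (𝓞 K)) (hb : b ≠ 0)
    (hcoeff : ∀ α : K, α • v ∈ Λ ↔ α ∈ ((b : FractionalIdeal (𝓞 K)⁰ K)⁻¹)) :
    ∀ c : Ideal (𝓞 K), c ≠ 0 →
      (∃ γ : K, γ ≠ 0 ∧
        FractionalIdeal.spanSingleton (𝓞 K)⁰ γ * (b : FractionalIdeal (𝓞 K)⁰ K) =
          (c : FractionalIdeal (𝓞 K)⁰ K)) →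
      Ideal.absNorm b ≤ Ideal.absNorm c :=
  coeff_ideal_of_minimal_vector_min_norm_general K htr V Q hQpos Λ v hv0 hmin b hb hcoeff
end

section
/- Let Q be a weakly reduced positive definite quadratic form in n variables over a totally real number field K, with outer coefficients h₁,…,hₙ. Then for all 1 ≤ i < j ≤ n and all real embeddings ν, μ of K, h_i^(ν) ≤ λ² · ᾱ(j−i)^{1/d} · h_j^(μ). -/
open NumberField Module

open Finset in
private theorem norm_eq_prod_real_embeddings
    (K : Type*) [Field K] [NumberField K]
    (htr : Fintype.card (K →+* ℝ) = finrank ℚ K) (x : K) :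
    (Algebra.norm ℚ x : ℝ) = ∏ ν : K →+* ℝ, ν x := by
  have hcard : Fintype.card (K →+* ℝ) = Fintype.card (K →ₐ[ℚ] ℂ) := by
    rw [htr, AlgHom.card]
  let f : (K →+* ℝ) → (K →ₐ[ℚ] ℂ) := fun ν => (Complex.ofRealHom.comp ν).toRatAlgHom
  have hinj : Function.Injective f := by
    intro ν μ hνμ
    ext y
    have h' : Complex.ofRealHom (ν y) = Complex.ofRealHom (μ y) :=
      congrArg (fun g : K →ₐ[ℚ] ℂ => g y) hνμ
    exact Complex.ofReal_injective h'
  have hbij : Function.Bijective f :=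
    (Fintype.bijective_iff_injective_and_card f).2 ⟨hinj, hcard⟩
  have h1 := Algebra.norm_eq_prod_embeddings ℚ ℂ (L := K) x
  rw [← Fintype.prod_bijective f hbij _ (fun σ => σ x) (fun ν => rfl)] at h1
  have h2 : (algebraMap ℚ ℂ) (Algebra.norm ℚ x) = ((Algebra.norm ℚ x : ℝ) : ℂ) := by
    push_cast [eq_ratCast (algebraMap ℚ ℂ)]
    rfl
  have h3 : ∏ ν : K →+* ℝ, f ν x = ((∏ ν : K →+* ℝ, ν x : ℝ) : ℂ) := by
    rw [Complex.ofReal_prod]; rfl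
  rw [h2, h3] at h1
  exact_mod_cast h1

/-- For a weakly reduced positive definite quadratic form over a totally real number field K
with outer coefficients h₁,…,hₙ, one has h_i^(ν) ≤ λ²·ᾱ(j−i)^{1/d}·h_j^(μ) for all i < j and
all real embeddings ν, μ. -/
theorem weakly_reduced_outer_coeff_bound
    (K : Type*) [Field K] [NumberField K]
    (htr : Fintype.card (K →+* ℝ) = finrank ℚ K)
    (n : ℕ) (lam : ℝ) (hlam : 1 ≤ lam)
    (alpha : ℕ → ℝ) (halpha1 : ∀ m, 1 ≤ alpha m) (halphamono : Monotone alpha)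
    (h : Fin n → K) (hpos : ∀ i, ∀ ν : K →+* ℝ, 0 < ν (h i))
    (hwr1 : ∀ i j : Fin n, i < j →
      (Algebra.norm ℚ (h i) : ℝ) ≤ alpha ((j : ℕ) - (i : ℕ)) * (Algebra.norm ℚ (h j) : ℝ))
    (hwr2 : ∀ (i : Fin n) (ν μ : K →+* ℝ), ν (h i) ≤ lam * μ (h i)) :
    ∀ i j : Fin n, i < j → ∀ ν μ : K →+* ℝ,
      ν (h i) ≤ lam ^ 2 * alpha ((j : ℕ) - (i : ℕ)) ^ ((1 : ℝ) / (finrank ℚ K : ℝ)) * μ (h j) := by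
  intro i j hij ν μ
  set d : ℕ := finrank ℚ K with hd
  have hd0 : 0 < d := finrank_pos
  have hdR : (0 : ℝ) < (d : ℝ) := by exact_mod_cast hd0
  set α : ℝ := alpha ((j : ℕ) - (i : ℕ)) with hα
  have hα1 : 1 ≤ α := halpha1 _
  have hα0 : (0 : ℝ) < α := lt_of_lt_of_le one_pos hα1
  have hlam0 : (0 : ℝ) < lam := lt_of_lt_of_le one_pos hlam
  have hcard : Fintype.card (K →+* ℝ) = d := htr
  have hNi : (Algebra.norm ℚ (h i) : ℝ) = ∏ ρ : K →+* ℝ, ρ (h i) :=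
    norm_eq_prod_real_embeddings K htr (h i)
  have hNj : (Algebra.norm ℚ (h j) : ℝ) = ∏ ρ : K →+* ℝ, ρ (h j) :=
    norm_eq_prod_real_embeddings K htr (h j)
  have hNjpos : (0 : ℝ) < (Algebra.norm ℚ (h j) : ℝ) := by
    rw [hNj]; exact Finset.prod_pos fun ρ _ => hpos j ρ
  have step1 : ν (h i) ^ d ≤ lam ^ d * (Algebra.norm ℚ (h i) : ℝ) := by
    have e1 : ν (h i) ^ d = ∏ _ρ : K →+* ℝ, ν (h i) := by
      rw [Finset.prod_const, Finset.card_univ, hcard]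
    calc ν (h i) ^ d = ∏ _ρ : K →+* ℝ, ν (h i) := e1
      _ ≤ ∏ ρ : K →+* ℝ, lam * ρ (h i) :=
        Finset.prod_le_prod (fun ρ _ => (hpos i ν).le) (fun ρ _ => hwr2 i ν ρ)
      _ = lam ^ d * (Algebra.norm ℚ (h i) : ℝ) := by
        rw [Finset.prod_mul_distrib, Finset.prod_const, Finset.card_univ, hcard, hNi]
  have step2 : (Algebra.norm ℚ (h j) : ℝ) ≤ lam ^ d * μ (h j) ^ d := by
    calc (Algebra.norm ℚ (h j) : ℝ) = ∏ ρ : K →+* ℝ, ρ (h j) := hNj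
      _ ≤ ∏ _ρ : K →+* ℝ, lam * μ (h j) :=
        Finset.prod_le_prod (fun ρ _ => (hpos j ρ).le) (fun ρ _ => hwr2 j ρ μ)
      _ = lam ^ d * μ (h j) ^ d := by
        rw [Finset.prod_const, Finset.card_univ, hcard, mul_pow]
  have key : ν (h i) ^ d ≤ (lam ^ 2 * α ^ ((1 : ℝ) / (d : ℝ)) * μ (h j)) ^ d := by
    have hrpow : (α ^ ((1 : ℝ) / (d : ℝ))) ^ d = α := by
      rw [← Real.rpow_natCast (α ^ ((1 : ℝ) / (d : ℝ))) d, ← Real.rpow_mul hα0.le,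
        one_div_mul_cancel hdR.ne', Real.rpow_one]
    have expand : (lam ^ 2 * α ^ ((1 : ℝ) / (d : ℝ)) * μ (h j)) ^ d
        = lam ^ d * lam ^ d * α * μ (h j) ^ d := by
      rw [mul_pow, mul_pow, hrpow, ← pow_mul]
      ring
    rw [expand]
    calc ν (h i) ^ d ≤ lam ^ d * (Algebra.norm ℚ (h i) : ℝ) := step1
      _ ≤ lam ^ d * (α * (Algebra.norm ℚ (h j) : ℝ)) := by
        exact mul_le_mul_of_nonneg_left (hwr1 i j hij) (pow_nonneg hlam0.le d)
      _ ≤ lam ^ d * (α * (lam ^ d * μ (h j) ^ d)) := by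
        refine mul_le_mul_of_nonneg_left ?_ (pow_nonneg hlam0.le d)
        exact mul_le_mul_of_nonneg_left step2 hα0.le
      _ = lam ^ d * lam ^ d * α * μ (h j) ^ d := by ring
  have hrhs : (0 : ℝ) ≤ lam ^ 2 * α ^ ((1 : ℝ) / (d : ℝ)) * μ (h j) := by
    exact mul_nonneg (mul_nonneg (pow_nonneg hlam0.le 2) (Real.rpow_nonneg hα0.le _)) (hpos j μ).le
  exact (pow_le_pow_iff_left₀ (hpos i ν).le hrhs hd0.ne').1 key
end

section
/- Let Q = (a_{ij}) be a HKZ-reduced positive definite quadratic form in n variables over a totally real number field K, with outer coefficients h₁,…,hₙ. Then there exist constants C₁,…,Cₙ (C_j depending only on j and K) and δ = C₁⋯Cₙ such that for every real embedding ν: h_j^(ν) ≤ a_{jj}^(ν) ≤ C_j·h_j^(ν) for each j, and det(Q)^(ν) ≤ a_{11}^(ν)⋯a_{nn}^(ν) ≤ δ·det(Q)^(ν). One may take C₁ = 1 and C_j = 1 + β²λ²·ᾱ(j−1)^{1/d}·(j−1). -/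
/-!
In a totally real field the norm is the product of the real embeddings. If all embeddings of
`x` are within a factor `λ` of each other, a single embedding therefore determines the norm up
to `λ^d`, so `N(h_i) ≤ ᾱ(j - i) N(h_j)` turns into `h_i^(ν) ≤ λ² ᾱ(j)^{1/d} h_j^(ν)` after taking
`d`-th roots. Each of the `j - 1` terms `h_i u_{ij}²` of `a_{jj}` is then at most
`β² λ² ᾱ(j)^{1/d} h_j^(ν)`, which gives the diagonal bounds; the determinant bounds are their
products.
-/

open NumberField Module Finset

namespace NumberField

variable {K : Type*} [Field K] [NumberField K]

theorem norm_eq_prod_realEmbeddings (htr : Fintype.card (K →+* ℝ) = finrank ℚ K) (x : K) :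
    (Algebra.norm ℚ x : ℝ) = ∏ ν : K →+* ℝ, ν x := by
  -- `htr` says that every complex embedding is real.
  have hbij : Function.Bijective fun ν : K →+* ℝ =>
      (Complex.ofRealHom.comp ν).toRatAlgHom := by
    refine (Fintype.bijective_iff_injective_and_card _).2 ⟨fun ν μ hνμ => ?_, ?_⟩
    · ext a
      exact Complex.ofReal_injective (DFunLike.congr_fun hνμ a)
    · rw [htr, ← Fintype.card_congr (RingHom.equivRatAlgHom K ℂ), Embeddings.card K ℂ]
  have hC : ((Algebra.norm ℚ x : ℝ) : ℂ) = ((∏ ν : K →+* ℝ, ν x : ℝ) : ℂ) := by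
    rw [Complex.ofReal_prod]
    exact (Algebra.norm_eq_prod_embeddings ℚ ℂ x).trans (hbij.prod_comp fun σ => σ x).symm
  exact_mod_cast hC

variable {lam : ℝ} {x : K} {ν : K →+* ℝ}

theorem pow_finrank_le_norm (htr : Fintype.card (K →+* ℝ) = finrank ℚ K)
    (hx : ∀ μ : K →+* ℝ, ν x ≤ lam * μ x) (hx0 : 0 ≤ ν x) :
    ν x ^ finrank ℚ K ≤ lam ^ finrank ℚ K * Algebra.norm ℚ x :=
  calc ν x ^ finrank ℚ K = ∏ _μ : K →+* ℝ, ν x := by rw [prod_const, card_univ, htr]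
    _ ≤ ∏ μ : K →+* ℝ, lam * μ x := prod_le_prod (fun _ _ => hx0) fun μ _ => hx μ
    _ = _ := by rw [prod_mul_distrib, prod_const, card_univ, htr, norm_eq_prod_realEmbeddings htr]

theorem norm_le_pow_finrank (htr : Fintype.card (K →+* ℝ) = finrank ℚ K)
    (hx : ∀ μ : K →+* ℝ, μ x ≤ lam * ν x) (hx0 : ∀ μ : K →+* ℝ, 0 ≤ μ x) :
    Algebra.norm ℚ x ≤ lam ^ finrank ℚ K * ν x ^ finrank ℚ K :=
  calc (Algebra.norm ℚ x : ℝ) = ∏ μ : K →+* ℝ, μ x := norm_eq_prod_realEmbeddings htr x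
    _ ≤ ∏ _μ : K →+* ℝ, lam * ν x := prod_le_prod (fun μ _ => hx0 μ) fun μ _ => hx μ
    _ = _ := by rw [prod_const, card_univ, htr, mul_pow]

theorem le_mul_rpow_mul_of_norm_le (htr : Fintype.card (K →+* ℝ) = finrank ℚ K)
    {a : ℝ} {y : K} (hlam : 0 ≤ lam) (ha : 0 ≤ a)
    (hx : ∀ ν μ : K →+* ℝ, ν x ≤ lam * μ x) (hy : ∀ ν μ : K →+* ℝ, ν y ≤ lam * μ y)
    (hx0 : 0 ≤ ν x) (hy0 : ∀ μ : K →+* ℝ, 0 ≤ μ y)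
    (hxy : (Algebra.norm ℚ x : ℝ) ≤ a * Algebra.norm ℚ y) :
    ν x ≤ lam ^ 2 * a ^ ((1 : ℝ) / finrank ℚ K) * ν y := by
  have hd : finrank ℚ K ≠ 0 := finrank_pos.ne'
  have hroot : (a ^ ((1 : ℝ) / finrank ℚ K)) ^ finrank ℚ K = a := by
    rw [← Real.rpow_natCast, ← Real.rpow_mul ha, one_div_mul_cancel (by exact_mod_cast hd),
      Real.rpow_one]
  have hνy := hy0 ν
  refine (pow_le_pow_iff_left₀ hx0 (by positivity) hd).1 ?_
  calc ν x ^ finrank ℚ K ≤ lam ^ finrank ℚ K * Algebra.norm ℚ x :=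
        pow_finrank_le_norm htr (hx ν) hx0
    _ ≤ lam ^ finrank ℚ K * (a * Algebra.norm ℚ y) := by gcongr
    _ ≤ lam ^ finrank ℚ K * (a * (lam ^ finrank ℚ K * ν y ^ finrank ℚ K)) := by
        gcongr
        exact norm_le_pow_finrank htr (fun μ => hy μ ν) hy0
    _ = (lam ^ 2 * a ^ ((1 : ℝ) / finrank ℚ K) * ν y) ^ finrank ℚ K := by
        rw [mul_pow, mul_pow, hroot, ← pow_mul]
        ring

end NumberField

theorem add_sum_mul_sq_le {ι : Type*} {s : Finset ι} {a b : ι → ℝ} {v c β : ℝ}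
    (ha0 : ∀ i ∈ s, 0 ≤ a i) (ha : ∀ i ∈ s, a i ≤ c * v) (hb : ∀ i ∈ s, |b i| ≤ β) :
    v + ∑ i ∈ s, a i * b i ^ 2 ≤ (1 + β ^ 2 * c * #s) * v :=
  calc v + ∑ i ∈ s, a i * b i ^ 2 ≤ v + ∑ _i ∈ s, c * v * β ^ 2 := by
        refine add_le_add le_rfl (sum_le_sum fun i hi => ?_)
        have hb2 : b i ^ 2 ≤ β ^ 2 :=
          (sq_abs (b i)).symm.trans_le (pow_le_pow_left₀ (abs_nonneg _) (hb i hi) 2)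
        exact mul_le_mul (ha i hi) hb2 (sq_nonneg _) ((ha0 i hi).trans (ha i hi))
    _ = (1 + β ^ 2 * c * #s) * v := by rw [sum_const, nsmul_eq_mul]; ring

theorem hkz_diagonal_bounds_general
    (K : Type*) [Field K] [NumberField K]
    (htr : Fintype.card (K →+* ℝ) = finrank ℚ K)
    (n : ℕ) (beta lam : ℝ) (hlam : 1 ≤ lam)
    (alpha : ℕ → ℝ) (halpha1 : ∀ m, 1 ≤ alpha m) (halphamono : Monotone alpha)
    (h : Fin n → K) (hpos : ∀ i, ∀ ν : K →+* ℝ, 0 < ν (h i))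
    (u : Fin n → Fin n → K)
    (hwr1 : ∀ i j : Fin n, i < j →
      (Algebra.norm ℚ (h i) : ℝ) ≤ alpha ((j : ℕ) - (i : ℕ)) * (Algebra.norm ℚ (h j) : ℝ))
    (hwr2 : ∀ (i : Fin n) (ν μ : K →+* ℝ), ν (h i) ≤ lam * μ (h i))
    (hinner : ∀ i j : Fin n, i < j → ∀ ν : K →+* ℝ, |ν (u i j)| ≤ beta) :
    (∀ (j : Fin n) (ν : K →+* ℝ),
      ν (h j) ≤ ν (h j + ∑ i ∈ Finset.Iio j, h i * u i j ^ 2) ∧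
      ν (h j + ∑ i ∈ Finset.Iio j, h i * u i j ^ 2) ≤
        (1 + beta ^ 2 * lam ^ 2 * alpha (j : ℕ) ^ ((1 : ℝ) / (finrank ℚ K : ℝ)) * (j : ℕ)) *
          ν (h j)) ∧
    (∀ ν : K →+* ℝ,
      ν (∏ i, h i) ≤ ∏ j : Fin n, ν (h j + ∑ i ∈ Finset.Iio j, h i * u i j ^ 2) ∧
      (∏ j : Fin n, ν (h j + ∑ i ∈ Finset.Iio j, h i * u i j ^ 2)) ≤
        (∏ j : Fin n,
          (1 + beta ^ 2 * lam ^ 2 * alpha (j : ℕ) ^ ((1 : ℝ) / (finrank ℚ K : ℝ)) * (j : ℕ))) *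
          ν (∏ i, h i)) := by
  have hlam0 : 0 ≤ lam := zero_le_one.trans hlam
  have hcompare : ∀ i j : Fin n, i < j → ∀ ν : K →+* ℝ,
      ν (h i) ≤ lam ^ 2 * alpha j ^ ((1 : ℝ) / finrank ℚ K) * ν (h j) := by
    intro i j hij ν
    have hνj := (hpos j ν).le
    refine (le_mul_rpow_mul_of_norm_le htr hlam0 (zero_le_one.trans (halpha1 _)) (hwr2 i)
      (hwr2 j) (hpos i ν).le (fun μ => (hpos j μ).le) (hwr1 i j hij)).trans ?_
    gcongr
    · exact zero_le_one.trans (halpha1 _)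
    · exact halphamono (Nat.sub_le _ _)
  have hdiag : ∀ (j : Fin n) (ν : K →+* ℝ),
      ν (h j) ≤ ν (h j + ∑ i ∈ Iio j, h i * u i j ^ 2) ∧
      ν (h j + ∑ i ∈ Iio j, h i * u i j ^ 2) ≤
        (1 + beta ^ 2 * lam ^ 2 * alpha j ^ ((1 : ℝ) / finrank ℚ K) * (j : ℕ)) * ν (h j) := by
    intro j ν
    simp only [map_add, map_sum, map_mul, map_pow]
    refine ⟨le_add_of_nonneg_right (sum_nonneg fun i _ => ?_), ?_⟩
    · exact mul_nonneg (hpos i ν).le (sq_nonneg _)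
    refine (add_sum_mul_sq_le (fun i _ => (hpos i ν).le) (fun i hi => hcompare i j (mem_Iio.1 hi) ν)
      (fun i hi => hinner i j (mem_Iio.1 hi) ν)).trans_eq ?_
    rw [Fin.card_Iio]
    ring
  refine ⟨hdiag, fun ν => ⟨?_, ?_⟩⟩
  · rw [map_prod]
    exact prod_le_prod (fun j _ => (hpos j ν).le) fun j _ => (hdiag j ν).1
  · rw [map_prod, ← prod_mul_distrib]
    exact prod_le_prod (fun j _ => (hpos j ν).le.trans (hdiag j ν).1) fun j _ => (hdiag j ν).2

/-- For a HKZ-reduced positive definite quadratic form Q = (a_{ij}) over a totally real number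
field K, with outer coefficients h_j and inner coefficients u_{ij}, the diagonal entries
a_{jj} = h_j + Σ_{i<j} h_i u_{ij}² satisfy h_j^(ν) ≤ a_{jj}^(ν) ≤ C_j·h_j^(ν) with
C_j = 1 + β²λ²ᾱ(j−1)^{1/d}(j−1) (C₁ = 1), and
det(Q)^(ν) ≤ a_{11}^(ν)⋯a_{nn}^(ν) ≤ δ·det(Q)^(ν) with δ = C₁⋯Cₙ. -/
theorem hkz_diagonal_bounds
    (K : Type*) [Field K] [NumberField K]
    (htr : Fintype.card (K →+* ℝ) = finrank ℚ K)
    (n : ℕ) (beta lam : ℝ) (hbeta : 0 < beta) (hlam : 1 ≤ lam)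
    (alpha : ℕ → ℝ) (halpha1 : ∀ m, 1 ≤ alpha m) (halphamono : Monotone alpha)
    (h : Fin n → K) (hpos : ∀ i, ∀ ν : K →+* ℝ, 0 < ν (h i))
    (u : Fin n → Fin n → K)
    (hwr1 : ∀ i j : Fin n, i < j →
      (Algebra.norm ℚ (h i) : ℝ) ≤ alpha ((j : ℕ) - (i : ℕ)) * (Algebra.norm ℚ (h j) : ℝ))
    (hwr2 : ∀ (i : Fin n) (ν μ : K →+* ℝ), ν (h i) ≤ lam * μ (h i))
    (hinner : ∀ i j : Fin n, i < j → ∀ ν : K →+* ℝ, |ν (u i j)| ≤ beta) :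
    (∀ (j : Fin n) (ν : K →+* ℝ),
      ν (h j) ≤ ν (h j + ∑ i ∈ Finset.Iio j, h i * u i j ^ 2) ∧
      ν (h j + ∑ i ∈ Finset.Iio j, h i * u i j ^ 2) ≤
        (1 + beta ^ 2 * lam ^ 2 * alpha (j : ℕ) ^ ((1 : ℝ) / (finrank ℚ K : ℝ)) * (j : ℕ)) *
          ν (h j)) ∧
    (∀ ν : K →+* ℝ,
      ν (∏ i, h i) ≤ ∏ j : Fin n, ν (h j + ∑ i ∈ Finset.Iio j, h i * u i j ^ 2) ∧
      (∏ j : Fin n, ν (h j + ∑ i ∈ Finset.Iio j, h i * u i j ^ 2)) ≤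
        (∏ j : Fin n,
          (1 + beta ^ 2 * lam ^ 2 * alpha (j : ℕ) ^ ((1 : ℝ) / (finrank ℚ K : ℝ)) * (j : ℕ))) *
          ν (∏ i, h i)) :=
  hkz_diagonal_bounds_general K htr n beta lam hlam alpha halpha1 halphamono h hpos u hwr1 hwr2
    hinner
end

section
/- Let c(m) be the coefficient of x^m in the Maclaurin series of exp(βx/(1−x)) for a fixed real β > 0. Then there exists a constant D > 0 (depending only on β) such that c(m) ≤ D·e^{2√(βm)} for all m ≥ 1. -/
/-!
The real coefficient `c(m)` is the `m`-th Taylor coefficient at `0` of the holomorphic function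
`exp (β z / (1 - z))` on `ℂ \ {1}`, so Cauchy's estimate on the circle `|z| = r < 1` bounds it by
`exp (β r / (1 - r)) / r ^ m`, because `Re (z / (1 - z)) ≤ r / (1 - r)` there. With
`r = u / (1 + u)` this is `exp (β u) (1 + 1 / u) ^ m ≤ exp (β u + m / u)`, and the saddle point
`u = √(β m) / β` makes both terms equal to `√(β m)`, giving the bound with `D = 1`.
-/

open Complex Metric

theorem ofReal_deriv_eq_deriv {f : ℝ → ℝ} {F : ℂ → ℂ} {s : Set ℂ} (hs : IsOpen s)
    (hF : DifferentiableOn ℂ F s) (hfF : ∀ x : ℝ, (x : ℂ) ∈ s → (f x : ℂ) = F x) {x : ℝ}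
    (hx : (x : ℂ) ∈ s) : ((deriv f x : ℝ) : ℂ) = deriv F x := by
  have hnhds : ∀ᶠ t : ℝ in nhds x, (f t : ℂ) = F t :=
    Filter.eventually_of_mem ((hs.preimage continuous_ofReal).mem_nhds hx) hfF
  have hF' : HasDerivAt (fun t : ℝ => (f t : ℂ)) (deriv F x) x :=
    ((hF.differentiableAt (hs.mem_nhds hx)).hasDerivAt.comp_ofReal).congr_of_eventuallyEq hnhds
  have hf : DifferentiableAt ℝ f x := by
    have h := (reCLM.hasFDerivAt.comp_hasDerivAt x hF').differentiableAt
    simp only [Function.comp_def, reCLM_apply, ofReal_re] at h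
    exact h
  exact hf.hasDerivAt.ofReal_comp.unique hF'

theorem ofReal_iteratedDeriv_eq_iteratedDeriv {f : ℝ → ℝ} {F : ℂ → ℂ} {s : Set ℂ} (hs : IsOpen s)
    (hF : DifferentiableOn ℂ F s) (hfF : ∀ x : ℝ, (x : ℂ) ∈ s → (f x : ℂ) = F x) (n : ℕ) {x : ℝ}
    (hx : (x : ℂ) ∈ s) : ((iteratedDeriv n f x : ℝ) : ℂ) = iteratedDeriv n F x := by
  induction n generalizing f F with
  | zero => simpa using hfF x hx
  | succ n ih =>
    rw [iteratedDeriv_succ', iteratedDeriv_succ']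
    exact ih (hF.deriv hs) fun y hy => ofReal_deriv_eq_deriv hs hF hfF hy

theorem norm_cexp_mul_div_one_sub_le {β r : ℝ} (hβ : 0 ≤ β) (hr : r < 1) {z : ℂ}
    (hz : ‖z‖ ≤ r) : ‖cexp (β * z / (1 - z))‖ ≤ Real.exp (β * r / (1 - r)) := by
  have hgap : 1 - r ≤ ‖1 - z‖ := by
    linarith [norm_sub_norm_le (1 : ℂ) z, norm_one (α := ℂ)]
  rw [norm_exp, Real.exp_le_exp]
  calc (β * z / (1 - z)).re ≤ ‖β * z / (1 - z)‖ := re_le_norm _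
    _ = β * ‖z‖ / ‖1 - z‖ := by rw [norm_div, norm_mul, norm_real, Real.norm_of_nonneg hβ]
    _ ≤ β * r / (1 - r) := by gcongr; exact mul_nonneg hβ ((norm_nonneg z).trans hz)

theorem differentiableOn_cexp_mul_div_one_sub (β : ℂ) :
    DifferentiableOn ℂ (fun z => cexp (β * z / (1 - z))) {1}ᶜ := fun _ hz =>
  ((differentiableAt_id.const_mul β).div (differentiableAt_id.const_sub 1)
    (sub_ne_zero.2 (Ne.symm hz))).cexp.differentiableWithinAt

theorem norm_iteratedDeriv_cexp_mul_div_one_sub_le {β u : ℝ} (hβ : 0 ≤ β) (hu : 0 < u) (m : ℕ) :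
    ‖iteratedDeriv m (fun z => cexp (β * z / (1 - z))) 0‖ ≤
      m.factorial * Real.exp (β * u + m / u) := by
  set R := u / (1 + u)
  have hR0 : 0 < R := by positivity
  have hR1 : R < 1 := (div_lt_one (by positivity)).2 (by linarith)
  have hball : closedBall (0 : ℂ) R ⊆ {1}ᶜ := fun z hz h1 => by
    simp [Set.mem_singleton_iff.1 h1] at hz; linarith
  have hcauchy := norm_iteratedDeriv_le_of_forall_mem_sphere_norm_le m hR0
    ((differentiableOn_cexp_mul_div_one_sub β).diffContOnCl_ball hball)
    (fun z hz => norm_cexp_mul_div_one_sub_le hβ hR1 (mem_sphere_zero_iff_norm.1 hz).le)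
  have hexponent : β * R / (1 - R) = β * u := by
    simp only [R]; field_simp; ring
  have hinv : R⁻¹ ^ m ≤ Real.exp (m / u) := by
    calc R⁻¹ ^ m = (1 / u + 1) ^ m := by simp only [R]; field_simp
      _ ≤ Real.exp (1 / u) ^ m := by gcongr; exact Real.add_one_le_exp _
      _ = Real.exp (m / u) := by rw [← Real.exp_nat_mul]; ring_nf
  calc _ ≤ m.factorial * Real.exp (β * R / (1 - R)) / R ^ m := hcauchy
    _ = (m.factorial : ℝ) * (Real.exp (β * u) * R⁻¹ ^ m) := by rw [hexponent, inv_pow]; ring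
    _ ≤ (m.factorial : ℝ) * (Real.exp (β * u) * Real.exp (m / u)) := by gcongr
    _ = m.factorial * Real.exp (β * u + m / u) := by rw [Real.exp_add]

/-- The Maclaurin coefficients c(m) of exp(βx/(1−x)) satisfy c(m) ≤ D·e^{2√(βm)} for some
constant D > 0 depending only on β > 0. -/
theorem maclaurin_coeff_bound (beta : ℝ) (hbeta : 0 < beta) :
    ∃ D : ℝ, 0 < D ∧ ∀ m : ℕ, 1 ≤ m →
      iteratedDeriv m (fun x : ℝ => Real.exp (beta * x / (1 - x))) 0 / (Nat.factorial m : ℝ) ≤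
        D * Real.exp (2 * Real.sqrt (beta * m)) := by
  refine ⟨1, one_pos, fun m hm => ?_⟩
  set s := Real.sqrt (beta * m)
  have hs : 0 < s := Real.sqrt_pos.2 (by positivity)
  have hsq : s ^ 2 = beta * m := Real.sq_sqrt (by positivity)
  have hcomplex : ((iteratedDeriv m (fun x : ℝ => Real.exp (beta * x / (1 - x))) 0 : ℝ) : ℂ) =
      iteratedDeriv m (fun z => cexp (beta * z / (1 - z))) 0 := by
    simpa using ofReal_iteratedDeriv_eq_iteratedDeriv isOpen_compl_singleton
      (differentiableOn_cexp_mul_div_one_sub beta) (fun x _ => by push_cast; rfl) m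
      (x := 0) (by simp)
  have hsaddle : beta * (s / beta) + m / (s / beta) = 2 * s := by
    field_simp; linear_combination -hsq
  rw [div_le_iff₀ (by positivity), one_mul, mul_comm, ← hsaddle]
  calc _ ≤ ‖((iteratedDeriv m (fun x : ℝ => Real.exp (beta * x / (1 - x))) 0 : ℝ) : ℂ)‖ :=
        (le_abs_self _).trans_eq (norm_real _).symm
    _ ≤ _ := hcomplex ▸ norm_iteratedDeriv_cexp_mul_div_one_sub_le hbeta.le (by positivity) m
end

section
/- Let K be a totally real number field of degree d, and fix: a rational prime p unramified in K with ℓ such that every positive semidefinite integral binary quadratic form over K with scale divisible by p^ℓ is represented by I₅; r such that every totally positive a ∈ O with Tr(a) ≥ r is represented by I₅; and a totally positive integral basis ω₁,…,ω_d with associated constant γ. Let n ≥ 2, A = diag(a₁,…,aₙ) diagonal over O, S = (s_{ij}) symmetric over O, and for each (i,j) let π_{ij} ∈ P be the representative of s_{ij} mod p^ℓO (where P = {Σf_iω_i : 1 ≤ f_i ≤ p^ℓ}). Suppose a_i = Σ_j t_{ij} with t_{ij} totally positive, t_{ij}t_{ji} ≻ (s_{ij} − π_{ij})² for all j, and min over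 embeddings of (t_{ii}+s_{ii}) exceeds 2(n−1)γ + r/d for all i. Then A + S is represented by the sum of 5n + (n(n−1)/2)(d+5) squares of linear forms over O, i.e. A + S ≼ I_{5n + n(n−1)(d+5)/2}. -/
/-!
Put `c i j = f_π + t_ij + σ_ij` and `c j i = w_π + t_ji + σ_ji` for `i < j`, where `σ_ij ∈ P` is the
totally positive representative of `-t_ij` modulo `p^ℓ`. Then `A + S` is the sum of the diagonal
matrix with entries `a_i + s_ii - ∑_{j ≠ i} c i j` and, for every `i < j`, the binary block
`[[c i j, s_ij], [s_ij, c j i]]` placed in rows and columns `i, j`.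
Each binary block is the Gram matrix `[[f_π, π], [π, w_π]]` of the vectors `(f_k)` and `(ω_k)`
(`d` squares) plus `[[t_ij + σ_ij, s_ij - π], [s_ij - π, t_ji + σ_ji]]`, which is positive
semidefinite at every real place, since `t_ij t_ji ≻ (s_ij - π)²`, and has scale divisible by
`p^ℓ`, so it is represented by `I₅`. The `i`-th diagonal entry is `t_ii + s_ii` minus `n - 1`
terms of size at most `2γ` at every real place, so it exceeds `r / d` there; its trace is then
at least `r` and it is a sum of five squares.
-/

open NumberField Module Matrix Finset

def Matrix.pairBlock {ι R : Type*} [DecidableEq ι] [AddCommMonoid R] (i j : ι)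
    (B : Matrix (Fin 2) (Fin 2) R) : Matrix ι ι R :=
  single i i (B 0 0) + single i j (B 0 1) + single j i (B 1 0) + single j j (B 1 1)

section IsSumOfSquares

variable {ι R : Type*} [CommSemiring R]

/-- `M ≼ I_m`: the quadratic form of `M` is a sum of `m` squares of linear forms. -/
def Matrix.IsSumOfSquares (m : ℕ) (M : Matrix ι ι R) : Prop :=
  ∃ U : Matrix (Fin m) ι R, M = Uᵀ * U

theorem Matrix.isSumOfSquares_zero : IsSumOfSquares 0 (0 : Matrix ι ι R) :=
  ⟨0, by simp⟩

theorem Matrix.IsSumOfSquares.add {m k : ℕ} {M N : Matrix ι ι R} (hM : IsSumOfSquares m M)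
    (hN : IsSumOfSquares k N) : IsSumOfSquares (m + k) (M + N) := by
  obtain ⟨U, rfl⟩ := hM
  obtain ⟨V, rfl⟩ := hN
  refine ⟨(fromRows U V).submatrix finSumFinEquiv.symm id, ?_⟩
  rw [transpose_submatrix, submatrix_mul_equiv _ _ _ finSumFinEquiv.symm, submatrix_id_id,
    transpose_fromRows, fromCols_mul_fromRows]

theorem Matrix.isSumOfSquares_sum {α : Type*} (s : Finset α) (m : α → ℕ)
    (M : α → Matrix ι ι R) (h : ∀ c ∈ s, IsSumOfSquares (m c) (M c)) :
    IsSumOfSquares (∑ c ∈ s, m c) (∑ c ∈ s, M c) := by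
  classical
  induction s using Finset.induction_on with
  | empty => simpa using isSumOfSquares_zero
  | insert c s hc ih =>
    rw [sum_insert hc, sum_insert hc]
    exact (h c (mem_insert_self c s)).add (ih fun c' hc' => h c' (mem_insert_of_mem hc'))

theorem Matrix.IsSumOfSquares.transpose_mul_mul {κ : Type*} [Fintype κ] {m : ℕ}
    {B : Matrix κ κ R} (hB : IsSumOfSquares m B) (P : Matrix κ ι R) :
    IsSumOfSquares m (Pᵀ * B * P) := by
  obtain ⟨U, rfl⟩ := hB
  exact ⟨U * P, by rw [transpose_mul, Matrix.mul_assoc, Matrix.mul_assoc, Matrix.mul_assoc]⟩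

theorem Matrix.isSumOfSquares_gram {m : ℕ} (u v : Fin m → R) :
    IsSumOfSquares m !![∑ k, u k ^ 2, ∑ k, u k * v k; ∑ k, u k * v k, ∑ k, v k ^ 2] := by
  refine ⟨of fun k => ![u k, v k], ?_⟩
  ext x z
  fin_cases x <;> fin_cases z <;> simp [mul_apply, sq, mul_comm]

variable [DecidableEq ι]

theorem Matrix.isSumOfSquares_single {m : ℕ} (i : ι) (y : Fin m → R) :
    IsSumOfSquares m (single i i (∑ k, y k ^ 2)) := by
  refine ⟨of fun k => Pi.single i (y k), ?_⟩
  ext x z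
  simp only [single_apply, mul_apply, transpose_apply, of_apply, Pi.single_apply]
  by_cases hx : i = x <;> by_cases hz : i = z <;> subst_vars <;> simp_all [sq, eq_comm]

theorem Matrix.IsSumOfSquares.pairBlock {m : ℕ} {B : Matrix (Fin 2) (Fin 2) R}
    (hB : IsSumOfSquares m B) (i j : ι) : IsSumOfSquares m (pairBlock i j B) := by
  convert hB.transpose_mul_mul (of ![Pi.single i 1, Pi.single j 1])
  ext x z
  simp only [Matrix.pairBlock, mul_apply, transpose_apply, of_apply, Fin.sum_univ_two,
    cons_val_zero, cons_val_one, Pi.single_apply, add_apply, single_apply]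
  simp only [eq_comm (a := x), eq_comm (a := z), ite_mul, mul_ite, one_mul, zero_mul, mul_zero,
    mul_one]
  split_ifs <;> simp_all
  abel

end IsSumOfSquares

theorem Finset.sum_filter_lt_add_swap {ι β : Type*} [Fintype ι] [LinearOrder ι] [AddCommMonoid β]
    (g : ι → ι → β) :
    ∑ q ∈ univ.filter (fun q : ι × ι => q.1 < q.2), (g q.1 q.2 + g q.2 q.1) =
      ∑ a, ∑ b ∈ univ.erase a, g a b := by
  have hswap : ∑ q : ι × ι, (if q.1 < q.2 then g q.2 q.1 else 0) =
      ∑ q : ι × ι, (if q.2 < q.1 then g q.1 q.2 else 0) :=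
    Fintype.sum_equiv (Equiv.prodComm ι ι) _ _ fun _ => rfl
  calc ∑ q ∈ univ.filter (fun q : ι × ι => q.1 < q.2), (g q.1 q.2 + g q.2 q.1)
      = ∑ q : ι × ι, ((if q.1 < q.2 then g q.1 q.2 else 0) +
          (if q.2 < q.1 then g q.1 q.2 else 0)) := by
        rw [sum_filter]
        simp only [ite_add_zero]
        rw [sum_add_distrib, hswap, ← sum_add_distrib]
    _ = ∑ q : ι × ι, if q.1 ≠ q.2 then g q.1 q.2 else 0 := by
        refine sum_congr rfl fun q _ => ?_
        rcases lt_trichotomy q.1 q.2 with h | h | h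
        · simp [h, h.ne, not_lt_of_gt h]
        · simp [h]
        · simp [h, h.ne', not_lt_of_gt h]
    _ = ∑ a, ∑ b ∈ univ.erase a, g a b := by
        rw [Fintype.sum_prod_type]
        exact sum_congr rfl fun a _ => by rw [← filter_ne', sum_filter]; simp [eq_comm]

theorem Matrix.eq_sum_single_add_sum_pairBlock {ι R : Type*} [Fintype ι] [LinearOrder ι]
    [AddCommGroup R] (M : Matrix ι ι R) (c : ι → ι → R) :
    M = ∑ i, single i i (M i i - ∑ j ∈ univ.erase i, c i j) +
      ∑ q ∈ univ.filter (fun q : ι × ι => q.1 < q.2),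
        pairBlock q.1 q.2 !![c q.1 q.2, M q.1 q.2; M q.2 q.1, c q.2 q.1] := by
  set g : ι → ι → Matrix ι ι R := fun a b => single a a (c a b) + single a b (M a b)
  have hblock : ∀ a b : ι, pairBlock a b !![c a b, M a b; M b a, c b a] = g a b + g b a :=
    fun a b => by
      simp only [pairBlock, g, of_apply, cons_val', cons_val_zero, cons_val_one, empty_val',
        cons_val_fin_one]
      abel
  simp only [hblock]
  rw [sum_filter_lt_add_swap, ← sum_add_distrib]
  conv_lhs => rw [matrix_eq_sum_single M]
  refine sum_congr rfl fun a _ => ?_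
  have hsum : ∑ b ∈ univ.erase a, single a a (c a b) = single a a (∑ b ∈ univ.erase a, c a b) :=
    (map_sum (singleAddMonoidHom (α := R) a a) _ _).symm
  rw [← add_sum_erase _ _ (mem_univ a), sum_add_distrib, ← add_assoc, hsum, ← single_add,
    sub_add_cancel]

theorem Matrix.isSumOfSquares_of_blocks {ι R : Type*} [Fintype ι] [LinearOrder ι] [CommRing R]
    {m k : ℕ} (M : Matrix ι ι R) (c : ι → ι → R)
    (hdiag : ∀ i, IsSumOfSquares m (single i i (M i i - ∑ j ∈ univ.erase i, c i j)))
    (hblock : ∀ i j, i < j → IsSumOfSquares k !![c i j, M i j; M j i, c j i]) :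
    IsSumOfSquares (Fintype.card ι * m + (Fintype.card ι).choose 2 * k) M := by
  have h₁ := isSumOfSquares_sum univ (fun _ => m) _ fun i _ => hdiag i
  have h₂ := isSumOfSquares_sum (univ.filter fun q : ι × ι => q.1 < q.2) (fun _ => k) _
    fun q hq => (hblock q.1 q.2 (mem_filter.1 hq).2).pairBlock q.1 q.2
  rw [sum_const, smul_eq_mul, card_univ] at h₁
  rw [sum_const, smul_eq_mul, ← univ_product_univ, card_product_filter_lt, card_univ] at h₂
  rw [eq_sum_single_add_sum_pairBlock M c]
  exact h₁.add h₂


theorem Matrix.posSemidef_fin_two {a b c : ℝ} (ha : 0 ≤ a) (hc : 0 ≤ c) (hb : b ^ 2 ≤ a * c) :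
    (!![a, b; b, c]).PosSemidef := by
  rw [posSemidef_iff_dotProduct_mulVec]
  refine ⟨by ext i j; fin_cases i <;> fin_cases j <;> simp, fun v => ?_⟩
  simp only [star_trivial, dotProduct, mulVec, Fin.sum_univ_two, of_apply, cons_val',
    cons_val_zero, cons_val_one, empty_val', cons_val_fin_one]
  rcases ha.eq_or_lt with rfl | ha
  · obtain rfl : b = 0 := by nlinarith
    nlinarith [mul_nonneg hc (sq_nonneg (v 1))]
  · nlinarith [sq_nonneg (a * v 0 + b * v 1), mul_nonneg ha.le (sq_nonneg (v 1))]

theorem Module.Basis.exists_mem_Icc_dvd_sum_sub {ι R : Type*} [Fintype ι] [CommRing R]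
    (b : Basis ι ℤ R) {m : ℕ} (hm : 1 ≤ m) (x : R) :
    ∃ g : ι → ℕ, (∀ k, 1 ≤ g k ∧ g k ≤ m) ∧ (m : R) ∣ ∑ k, (g k : R) * b k - x := by
  have hm' : (0 : ℤ) < m := by exact_mod_cast hm
  set z : ι → ℤ := fun k => b.repr x k
  -- the representative of `z k` modulo `m` in `[1, m]`
  set g : ι → ℕ := fun k => ((z k - 1) % m + 1).toNat
  have hg : ∀ k, (g k : ℤ) = (z k - 1) % m + 1 := fun k =>
    Int.toNat_of_nonneg (by linarith [Int.emod_nonneg (z k - 1) hm'.ne'])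
  refine ⟨g, fun k => ?_, ?_⟩
  · have h0 := Int.emod_nonneg (z k - 1) hm'.ne'
    have h1 := Int.emod_lt_of_pos (z k - 1) hm'
    have := hg k
    omega
  · have hx : ∑ k, (g k : R) * b k - x = ∑ k, ((g k - z k : ℤ) : R) * b k := by
      conv_lhs => rw [← b.sum_repr x]
      simp [z, sub_mul, zsmul_eq_mul]
    rw [hx]
    refine dvd_sum fun k _ => dvd_mul_of_dvd_left ?_ _
    have : (m : ℤ) ∣ g k - z k := ⟨-((z k - 1) / m), by rw [hg, Int.emod_def]; ring⟩
    exact_mod_cast Int.cast_dvd_cast (α := R) _ _ this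

section NumberField

variable {K : Type*} [Field K]

theorem NumberField.trace_eq_sum_real_embeddings [NumberField K]
    (htr : Fintype.card (K →+* ℝ) = finrank ℚ K) (x : K) :
    ((Algebra.trace ℚ K x : ℚ) : ℝ) = ∑ ν : K →+* ℝ, ν x := by
  -- `htr` says that every complex embedding of `K` is real.
  have hbij : Function.Bijective (Complex.ofRealHom.comp : (K →+* ℝ) → (K →+* ℂ)) := by
    rw [Fintype.bijective_iff_injective_and_card, htr, Embeddings.card K ℂ]
    exact ⟨fun ν₁ ν₂ h => RingHom.ext fun z => by simpa using RingHom.congr_fun h z, rfl⟩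
  apply Complex.ofReal_injective
  calc (((Algebra.trace ℚ K x : ℚ) : ℝ) : ℂ) = algebraMap ℚ ℂ (Algebra.trace ℚ K x) := by simp
    _ = ∑ σ : K →ₐ[ℚ] ℂ, σ x := trace_eq_sum_embeddings ℂ
    _ = ∑ τ : K →+* ℂ, τ x :=
      Fintype.sum_equiv (RingHom.equivRatAlgHom K ℂ).symm _ _ fun _ => rfl
    _ = ∑ ν : K →+* ℝ, ((ν x : ℝ) : ℂ) :=
      ((Equiv.ofBijective _ hbij).sum_comp fun τ : K →+* ℂ => τ x).symm
    _ = ((∑ ν : K →+* ℝ, ν x : ℝ) : ℂ) := by push_cast; rfl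

theorem NumberField.natCast_le_trace_of_forall_lt [NumberField K]
    (htr : Fintype.card (K →+* ℝ) = finrank ℚ K) {r : ℕ} {x : K}
    (hx : ∀ ν : K →+* ℝ, (r : ℝ) / finrank ℚ K < ν x) :
    (r : ℚ) ≤ Algebra.trace ℚ K x := by
  have hd : (0 : ℝ) < finrank ℚ K := by exact_mod_cast finrank_pos
  have h := card_nsmul_le_sum univ (fun ν : K →+* ℝ => ν x) _ fun ν _ => (hx ν).le
  rw [card_univ, htr, nsmul_eq_mul, mul_div_cancel₀ _ hd.ne', ← trace_eq_sum_real_embeddings htr]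
    at h
  exact_mod_cast h

theorem NumberField.exists_dvd_add_forall_pos_le {ι : Type*} [Fintype ι] [Nonempty ι]
    (b : Basis ι ℤ (𝓞 K)) (hb : ∀ k, ∀ ν : K →+* ℝ, 0 < ν (b k : K)) {m : ℕ} (hm : 1 ≤ m)
    {γ : ℝ} (hγ : ∀ g : ι → ℕ, (∀ k, 1 ≤ g k ∧ g k ≤ m) →
      ∀ ν : K →+* ℝ, ν ((∑ k, (g k : 𝓞 K) * b k : 𝓞 K) : K) ≤ γ)
    (x : 𝓞 K) : ∃ σ : 𝓞 K, (m : 𝓞 K) ∣ σ + x ∧ ∀ ν : K →+* ℝ, 0 < ν (σ : K) ∧ ν (σ : K) ≤ γ := by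
  obtain ⟨g, hg, hdvd⟩ := b.exists_mem_Icc_dvd_sum_sub hm (-x)
  refine ⟨∑ k, (g k : 𝓞 K) * b k, by rwa [sub_neg_eq_add] at hdvd, fun ν => ⟨?_, hγ g hg ν⟩⟩
  push_cast
  rw [map_sum]
  refine sum_pos (fun k _ => ?_) univ_nonempty
  rw [map_mul, map_natCast]
  exact mul_pos (by exact_mod_cast (hg k).1) (hb k ν)

theorem NumberField.isSumOfSquares_single_of_lt [NumberField K]
    (htr : Fintype.card (K →+* ℝ) = finrank ℚ K) {r : ℕ}
    (hrep1 : ∀ a : 𝓞 K, (∀ ν : K →+* ℝ, 0 < ν (a : K)) →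
      (r : ℚ) ≤ Algebra.trace ℚ K (a : K) → ∃ y : Fin 5 → 𝓞 K, a = ∑ i, y i ^ 2)
    {ι : Type*} [DecidableEq ι] (i : ι) {x : 𝓞 K}
    (hx : ∀ ν : K →+* ℝ, (r : ℝ) / finrank ℚ K < ν (x : K)) :
    IsSumOfSquares 5 (single i i x) := by
  obtain ⟨y, rfl⟩ := hrep1 x (fun ν => (by positivity : (0 : ℝ) ≤ r / _).trans_lt (hx ν))
    (natCast_le_trace_of_forall_lt htr hx)
  exact isSumOfSquares_single i y

theorem NumberField.isSumOfSquares_fin_two {p ℓ : ℕ}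
    (hrep2 : ∀ T : Matrix (Fin 2) (Fin 2) (𝓞 K), T.IsSymm →
      (∀ ν : K →+* ℝ, (T.map fun a => ν (a : K)).PosSemidef) →
      (∀ i j, (p : 𝓞 K) ^ ℓ ∣ T i j) →
      ∃ U : Matrix (Fin 5) (Fin 2) (𝓞 K), T = Uᵀ * U)
    {h b h' : 𝓞 K} (hh : ∀ ν : K →+* ℝ, 0 ≤ ν (h : K)) (hh' : ∀ ν : K →+* ℝ, 0 ≤ ν (h' : K))
    (hb : ∀ ν : K →+* ℝ, ν (b : K) ^ 2 ≤ ν (h : K) * ν (h' : K))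
    (hdvd : (p : 𝓞 K) ^ ℓ ∣ h) (hdvd_b : (p : 𝓞 K) ^ ℓ ∣ b) (hdvd' : (p : 𝓞 K) ^ ℓ ∣ h') :
    IsSumOfSquares 5 !![h, b; b, h'] := by
  refine hrep2 _ ?_ (fun ν => ?_) ?_
  · ext i j; fin_cases i <;> fin_cases j <;> rfl
  · convert posSemidef_fin_two (hh ν) (hh' ν) (hb ν) using 1
    ext i j; fin_cases i <;> fin_cases j <;> rfl
  · intro i j; fin_cases i <;> fin_cases j <;> assumption

theorem NumberField.isSumOfSquares_gram_add {p ℓ : ℕ}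
    (hrep2 : ∀ T : Matrix (Fin 2) (Fin 2) (𝓞 K), T.IsSymm →
      (∀ ν : K →+* ℝ, (T.map fun a => ν (a : K)).PosSemidef) →
      (∀ i j, (p : 𝓞 K) ^ ℓ ∣ T i j) →
      ∃ U : Matrix (Fin 5) (Fin 2) (𝓞 K), T = Uᵀ * U)
    {m : ℕ} (u v : Fin m → 𝓞 K) {s t t' σ σ' : 𝓞 K}
    (ht : ∀ ν : K →+* ℝ, 0 < ν (t : K)) (ht' : ∀ ν : K →+* ℝ, 0 < ν (t' : K))
    (hσ : ∀ ν : K →+* ℝ, 0 < ν (σ : K)) (hσ' : ∀ ν : K →+* ℝ, 0 < ν (σ' : K))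
    (hs : ∀ ν : K →+* ℝ, ν (((s - ∑ k, u k * v k) ^ 2 : 𝓞 K) : K) < ν ((t * t' : 𝓞 K) : K))
    (hdvd : (p : 𝓞 K) ^ ℓ ∣ σ + t) (hdvd_s : (p : 𝓞 K) ^ ℓ ∣ s - ∑ k, u k * v k)
    (hdvd' : (p : 𝓞 K) ^ ℓ ∣ σ' + t') :
    IsSumOfSquares (m + 5) !![∑ k, u k ^ 2 + σ + t, s; s, ∑ k, v k ^ 2 + σ' + t'] := by
  have hbin : IsSumOfSquares 5 !![σ + t, s - ∑ k, u k * v k; s - ∑ k, u k * v k, σ' + t'] := by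
    refine isSumOfSquares_fin_two hrep2 (fun ν => ?_) (fun ν => ?_) (fun ν => ?_)
      hdvd hdvd_s hdvd'
    · push_cast; rw [map_add]; linarith [ht ν, hσ ν]
    · push_cast; rw [map_add]; linarith [ht' ν, hσ' ν]
    · have := hs ν
      push_cast at this ⊢
      simp only [map_add, map_mul, map_pow] at this ⊢
      nlinarith [ht ν, ht' ν, hσ ν, hσ' ν, mul_pos (ht ν) (hσ' ν), mul_pos (hσ ν) (ht' ν),
        mul_pos (hσ ν) (hσ' ν)]
  convert (isSumOfSquares_gram u v).add hbin using 1
  ext i j; fin_cases i <;> fin_cases j <;> simp [add_assoc]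

theorem NumberField.lt_sub_sum_erase {ι : Type*} [Fintype ι] [DecidableEq ι] (i : ι)
    {a s : 𝓞 K} {t e : ι → 𝓞 K} (hat : a = ∑ j, t j) {C r : ℝ} (ν : K →+* ℝ)
    (he : ∀ j, ν (e j : K) ≤ C) (hi : (Fintype.card ι - 1) * C + r < ν ((t i + s : 𝓞 K) : K)) :
    r < ν ((a + s - ∑ j ∈ univ.erase i, (e j + t j) : 𝓞 K) : K) := by
  have hsplit : a + s - ∑ j ∈ univ.erase i, (e j + t j) = t i + s - ∑ j ∈ univ.erase i, e j := by
    rw [hat, ← add_sum_erase _ _ (mem_univ i), sum_add_distrib]; ring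
  have hsum := sum_le_card_nsmul (univ.erase i) _ C fun j _ => he j
  rw [card_erase_of_mem (mem_univ i), card_univ, nsmul_eq_mul,
    Nat.cast_pred (Fintype.card_pos_iff.2 ⟨i⟩)] at hsum
  rw [hsplit]
  push_cast at hsum hi ⊢
  rw [map_sub, map_sum]
  linarith

end NumberField

theorem diag_add_symm_represented_by_sum_of_squares_general
    (K : Type*) [Field K] [NumberField K]
    (htr : Fintype.card (K →+* ℝ) = finrank ℚ K)
    (p ℓ r γ : ℕ)
    (hrep2 : ∀ T : Matrix (Fin 2) (Fin 2) (𝓞 K), T.IsSymm →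
      (∀ ν : K →+* ℝ, (T.map fun a => ν (a : K)).PosSemidef) →
      (∀ i j, (p : 𝓞 K) ^ ℓ ∣ T i j) →
      ∃ U : Matrix (Fin 5) (Fin 2) (𝓞 K), T = Uᵀ * U)
    (hrep1 : ∀ a : 𝓞 K, (∀ ν : K →+* ℝ, 0 < ν (a : K)) →
      (r : ℚ) ≤ Algebra.trace ℚ K (a : K) → ∃ y : Fin 5 → 𝓞 K, a = ∑ i, y i ^ 2)
    (ω : Fin (finrank ℚ K) → 𝓞 K)
    (hωpos : ∀ k, ∀ ν : K →+* ℝ, 0 < ν ((ω k : K)))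
    (hωli : LinearIndependent ℤ ω)
    (hωspan : Submodule.span ℤ (Set.range ω) = ⊤)
    (hγ : ∀ f : Fin (finrank ℚ K) → ℕ, (∀ k, 1 ≤ f k ∧ f k ≤ p ^ ℓ) →
      ((∑ k, (f k) ^ 2 : ℕ) ≤ γ ∧
        ∀ ν : K →+* ℝ,
          ν (((∑ k, ω k ^ 2 : 𝓞 K) : K)) ≤ γ ∧
          ν (((∑ k, (f k : 𝓞 K) * ω k : 𝓞 K) : K)) ≤ γ))
    (n : ℕ)
    (a : Fin n → 𝓞 K) (S : Matrix (Fin n) (Fin n) (𝓞 K)) (hS : S.IsSymm)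
    (f : Fin n → Fin n → Fin (finrank ℚ K) → ℕ)
    (hf : ∀ i j k, 1 ≤ f i j k ∧ f i j k ≤ p ^ ℓ)
    (PP : Fin n → Fin n → 𝓞 K)
    (hPP : ∀ i j, PP i j = ∑ k, (f i j k : 𝓞 K) * ω k)
    (hPPS : ∀ i j, (p : 𝓞 K) ^ ℓ ∣ (S i j - PP i j))
    (t : Fin n → Fin n → 𝓞 K)
    (hat : ∀ i, a i = ∑ j, t i j)
    (htpos : ∀ i j, ∀ ν : K →+* ℝ, 0 < ν ((t i j : K)))
    (htt : ∀ i j, ∀ ν : K →+* ℝ,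
      ν ((((S i j - PP i j) ^ 2 : 𝓞 K) : K)) < ν (((t i j * t j i : 𝓞 K) : K)))
    (hdiag : ∀ i, ∀ ν : K →+* ℝ,
      (2 * ((n : ℝ) - 1) * γ + (r : ℝ) / (finrank ℚ K : ℝ)) <
        ν (((t i i + S i i : 𝓞 K) : K))) :
    ∃ U : Matrix (Fin (5 * n + n * (n - 1) / 2 * (finrank ℚ K + 5))) (Fin n) (𝓞 K),
      Matrix.diagonal a + S = Uᵀ * U := by
  obtain ⟨b, rfl⟩ : ∃ b : Basis (Fin (finrank ℚ K)) ℤ (𝓞 K), ⇑b = ω :=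
    ⟨.mk hωli hωspan.ge, Basis.coe_mk _ _⟩
  have : Nonempty (Fin (finrank ℚ K)) := ⟨⟨0, finrank_pos⟩⟩
  choose σ hσdvd hσ using fun i j => exists_dvd_add_forall_pos_le b hωpos
    ((hf i j ⟨0, finrank_pos⟩).1.trans (hf i j _).2) (fun g hg ν => ((hγ g hg).2 ν).2) (t i j)
  simp only [Nat.cast_pow] at hσdvd
  set e : Fin n → Fin n → 𝓞 K := fun i j =>
    (if i < j then ((∑ k, f i j k ^ 2 : ℕ) : 𝓞 K) else ∑ k, b k ^ 2) + σ i j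
  have he : ∀ i j (ν : K →+* ℝ), ν (e i j : K) ≤ 2 * γ := by
    intro i j ν
    have hF := (hγ (f i j) (hf i j)).1
    have hW := ((hγ (f i j) (hf i j)).2 ν).1
    have hσγ := (hσ i j ν).2
    simp only [e, RingOfIntegers.coe_eq_algebraMap] at hW hσγ ⊢
    split_ifs <;> simp only [map_add, map_natCast] <;> linarith [(Nat.cast_le (α := ℝ)).2 hF]
  suffices h : IsSumOfSquares (Fintype.card (Fin n) * 5 +
      (Fintype.card (Fin n)).choose 2 * (finrank ℚ K + 5)) (diagonal a + S) by
    rwa [Fintype.card_fin, Nat.choose_two_right, mul_comm n 5] at h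
  refine isSumOfSquares_of_blocks _ (fun i j => e i j + t i j) (fun i => ?_) fun i j hij => ?_
  · refine isSumOfSquares_single_of_lt htr hrep1 i fun ν => ?_
    rw [Matrix.add_apply, diagonal_apply_eq]
    refine lt_sub_sum_erase i (hat i) ν (he i · ν) ?_
    rw [Fintype.card_fin]
    linarith [hdiag i ν]
  · have hblk := isSumOfSquares_gram_add hrep2 (fun k => (f i j k : 𝓞 K)) b (htpos i j)
      (htpos j i) (fun ν => (hσ i j ν).1) (fun ν => (hσ j i ν).1) (by simpa [hPP] using htt i j)
      (hσdvd i j) (by simpa [hPP] using hPPS i j) (hσdvd j i)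
    simpa [e, hij, hij.not_gt, hij.ne, hij.ne', hS.apply j i] using hblk

/-- Representation criterion: with the fixed data (ℓ for binary forms with scale divisible by
p^ℓ represented by I₅; r for totally positive integers of large trace represented by I₅; a
totally positive integral basis ω with constant γ), if A = diag(a₁,…,aₙ) and S symmetric over
O satisfy a_i = Σ_j t_{ij} with t_{ij} totally positive, t_{ij}t_{ji} ≻ (s_{ij} − π_{ij})²,
and every embedding of t_{ii} + s_{ii} exceeds 2(n−1)γ + r/d, then A + S is represented by
I_{5n + (n(n−1)/2)(d+5)}. -/
theorem diag_add_symm_represented_by_sum_of_squares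
    (K : Type*) [Field K] [NumberField K]
    (htr : Fintype.card (K →+* ℝ) = finrank ℚ K)
    (p ℓ r γ : ℕ) (hp : p.Prime)
    (hrep2 : ∀ T : Matrix (Fin 2) (Fin 2) (𝓞 K), T.IsSymm →
      (∀ ν : K →+* ℝ, (T.map fun a => ν (a : K)).PosSemidef) →
      (∀ i j, (p : 𝓞 K) ^ ℓ ∣ T i j) →
      ∃ U : Matrix (Fin 5) (Fin 2) (𝓞 K), T = Uᵀ * U)
    (hrep1 : ∀ a : 𝓞 K, (∀ ν : K →+* ℝ, 0 < ν (a : K)) →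
      (r : ℚ) ≤ Algebra.trace ℚ K (a : K) → ∃ y : Fin 5 → 𝓞 K, a = ∑ i, y i ^ 2)
    (ω : Fin (finrank ℚ K) → 𝓞 K)
    (hωpos : ∀ k, ∀ ν : K →+* ℝ, 0 < ν ((ω k : K)))
    (hωli : LinearIndependent ℤ ω)
    (hωspan : Submodule.span ℤ (Set.range ω) = ⊤)
    (hγ : ∀ f : Fin (finrank ℚ K) → ℕ, (∀ k, 1 ≤ f k ∧ f k ≤ p ^ ℓ) →
      ((∑ k, (f k) ^ 2 : ℕ) ≤ γ ∧
        ∀ ν : K →+* ℝ,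
          ν (((∑ k, ω k ^ 2 : 𝓞 K) : K)) ≤ γ ∧
          ν (((∑ k, (f k : 𝓞 K) * ω k : 𝓞 K) : K)) ≤ γ))
    (n : ℕ) (hn : 2 ≤ n)
    (a : Fin n → 𝓞 K) (S : Matrix (Fin n) (Fin n) (𝓞 K)) (hS : S.IsSymm)
    (f : Fin n → Fin n → Fin (finrank ℚ K) → ℕ)
    (hf : ∀ i j k, 1 ≤ f i j k ∧ f i j k ≤ p ^ ℓ)
    (PP : Fin n → Fin n → 𝓞 K)
    (hPP : ∀ i j, PP i j = ∑ k, (f i j k : 𝓞 K) * ω k)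
    (hPPS : ∀ i j, (p : 𝓞 K) ^ ℓ ∣ (S i j - PP i j))
    (t : Fin n → Fin n → 𝓞 K)
    (hat : ∀ i, a i = ∑ j, t i j)
    (htpos : ∀ i j, ∀ ν : K →+* ℝ, 0 < ν ((t i j : K)))
    (htt : ∀ i j, ∀ ν : K →+* ℝ,
      ν ((((S i j - PP i j) ^ 2 : 𝓞 K) : K)) < ν (((t i j * t j i : 𝓞 K) : K)))
    (hdiag : ∀ i, ∀ ν : K →+* ℝ,
      (2 * ((n : ℝ) - 1) * γ + (r : ℝ) / (finrank ℚ K : ℝ)) <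
        ν (((t i i + S i i : 𝓞 K) : K))) :
    ∃ U : Matrix (Fin (5 * n + n * (n - 1) / 2 * (finrank ℚ K + 5))) (Fin n) (𝓞 K),
      Matrix.diagonal a + S = Uᵀ * U :=
  diag_add_symm_represented_by_sum_of_squares_general K htr p ℓ r γ hrep2 hrep1 ω hωpos hωli hωspan
    hγ n a S hS f hf PP hPP hPPS t hat htpos htt hdiag
end
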